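/- arXiv:1005.4455 — 8 statements merged into one kernel-verified Lean document; each statement's English description precedes it below -/
import Mathlib

section
/- Let W⁰, W¹, Wₕ⁰, Wₕ¹ be real Hilbert spaces with continuous linear maps d : W⁰ → W¹, dₕ : Wₕ⁰ → Wₕ¹, i⁰ : Wₕ⁰ → W⁰, i¹ : Wₕ¹ → W¹, π⁰ : W⁰ → Wₕ⁰, π¹ : W¹ → Wₕ¹ satisfying π¹ ∘ i¹ = id, d ∘ i⁰ = i¹ ∘ dₕ, and dₕ ∘ π⁰ = π¹ ∘ d. Then range dₕ = (i¹)⁻¹(range d), the preimage of range d under i¹; in particular, if range d is closed in W¹, then range dₕ is closed in Wₕ¹. -/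
/-- If `(W, d)` is a closed Hilbert complex and `(Wₕ, dₕ)` is related to it by
morphisms `i` and `π` with `π ∘ i = id`, then `range dₕ = i¹ ⁻¹' (range d)`; in
particular if `range d` is closed then so is `range dₕ`. -/
theorem approximating_complex_closed
    {W0 W1 Wh0 Wh1 : Type*}
    [NormedAddCommGroup W0] [InnerProductSpace ℝ W0] [CompleteSpace W0]
    [NormedAddCommGroup W1] [InnerProductSpace ℝ W1] [CompleteSpace W1]
    [NormedAddCommGroup Wh0] [InnerProductSpace ℝ Wh0] [CompleteSpace Wh0]
    [NormedAddCommGroup Wh1] [InnerProductSpace ℝ Wh1] [CompleteSpace Wh1]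
    (d : W0 →L[ℝ] W1) (dh : Wh0 →L[ℝ] Wh1)
    (i0 : Wh0 →L[ℝ] W0) (i1 : Wh1 →L[ℝ] W1)
    (π0 : W0 →L[ℝ] Wh0) (π1 : W1 →L[ℝ] Wh1)
    (hπi : ∀ x : Wh1, π1 (i1 x) = x)
    (hi : ∀ x : Wh0, d (i0 x) = i1 (dh x))
    (hπ : ∀ x : W0, dh (π0 x) = π1 (d x)) :
    (LinearMap.range (dh : Wh0 →ₗ[ℝ] Wh1) : Set Wh1) = i1 ⁻¹' (LinearMap.range (d : W0 →ₗ[ℝ] W1) : Set W1) ∧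
      (IsClosed (LinearMap.range (d : W0 →ₗ[ℝ] W1) : Set W1) →
        IsClosed (LinearMap.range (dh : Wh0 →ₗ[ℝ] Wh1) : Set Wh1)) := by
  have key : (LinearMap.range (dh : Wh0 →ₗ[ℝ] Wh1) : Set Wh1) = i1 ⁻¹' (LinearMap.range (d : W0 →ₗ[ℝ] W1) : Set W1) := by
    ext y
    constructor
    · rintro ⟨x, rfl⟩
      exact ⟨i0 x, (hi x)⟩
    · rintro ⟨x, hx⟩
      exact ⟨π0 x, by rw [ContinuousLinearMap.coe_coe] at hx ⊢; rw [hπ, hx, hπi]⟩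
  exact ⟨key, fun hcl => key ▸ hcl.preimage i1.continuous⟩
end

section
/- Let W⁰, W¹, W² be real Hilbert spaces with continuous linear maps d⁰ : W⁰ → W¹ and d¹ : W¹ → W² satisfying d¹ ∘ d⁰ = 0, and let Wₕ⁰, Wₕ¹ be real Hilbert spaces with a continuous linear map dₕ⁰ : Wₕ⁰ → Wₕ¹. Let i⁰ : Wₕ⁰ → W⁰, i¹ : Wₕ¹ → W¹, π⁰ : W⁰ → Wₕ⁰, π¹ : W¹ → Wₕ¹ be continuous linear maps with π¹ ∘ i¹ = id, π¹ ∘ d⁰ = dₕ⁰ ∘ π⁰, and i¹ ∘ dₕ⁰ = d⁰ ∘ i⁰. Define the harmonic space H := ker d¹ ∩ (closure(range d⁰))^⊥ and assume ‖q − i¹(π¹ q)‖ < ‖q‖ for every nonzero q ∈ H. Then for every z ∈ ker d¹ with π¹ z ∈ closure(range dₕ⁰), one has z ∈ closure(range d⁰). (That is, the map induced by π on reduced cohomology is injective; since π ∘ i = id it is already surjective, hence an isomorphism.) -/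
/-- If the harmonic space `H = ker d¹ ∩ (closure (range d⁰))ᗮ` satisfies
`‖q − i¹ (π¹ q)‖ < ‖q‖` for every nonzero `q ∈ H`, then the map induced by `π` on
reduced cohomology is injective: every cocycle `z` with `π¹ z` in the closure of the
discrete coboundaries lies in the closure of the coboundaries. -/
theorem induced_cohomology_injective
    {W0 W1 W2 Wh0 Wh1 : Type*}
    [NormedAddCommGroup W0] [InnerProductSpace ℝ W0] [CompleteSpace W0]
    [NormedAddCommGroup W1] [InnerProductSpace ℝ W1] [CompleteSpace W1]
    [NormedAddCommGroup W2] [InnerProductSpace ℝ W2] [CompleteSpace W2]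
    [NormedAddCommGroup Wh0] [InnerProductSpace ℝ Wh0] [CompleteSpace Wh0]
    [NormedAddCommGroup Wh1] [InnerProductSpace ℝ Wh1] [CompleteSpace Wh1]
    (d0 : W0 →L[ℝ] W1) (d1 : W1 →L[ℝ] W2) (hdd : ∀ x : W0, d1 (d0 x) = 0)
    (dh0 : Wh0 →L[ℝ] Wh1)
    (i0 : Wh0 →L[ℝ] W0) (i1 : Wh1 →L[ℝ] W1)
    (π0 : W0 →L[ℝ] Wh0) (π1 : W1 →L[ℝ] Wh1)
    (hπi : ∀ x : Wh1, π1 (i1 x) = x)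
    (hπd : ∀ x : W0, π1 (d0 x) = dh0 (π0 x))
    (hid : ∀ x : Wh0, i1 (dh0 x) = d0 (i0 x))
    (hH : ∀ q ∈ LinearMap.ker (d1 : W1 →ₗ[ℝ] W2) ⊓ ((LinearMap.range (d0 : W0 →ₗ[ℝ] W1)).topologicalClosure)ᗮ,
      q ≠ 0 → ‖q - i1 (π1 q)‖ < ‖q‖) :
    ∀ z ∈ LinearMap.ker (d1 : W1 →ₗ[ℝ] W2),
      π1 z ∈ (LinearMap.range (dh0 : Wh0 →ₗ[ℝ] Wh1)).topologicalClosure →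
        z ∈ (LinearMap.range (d0 : W0 →ₗ[ℝ] W1)).topologicalClosure := by
  intro z hz hπz
  set B := (LinearMap.range (d0 : W0 →ₗ[ℝ] W1)).topologicalClosure with hB
  have hBclosed : IsClosed (B : Set W1) := (LinearMap.range (d0 : W0 →ₗ[ℝ] W1)).isClosed_topologicalClosure
  have hi1B : ∀ x ∈ (LinearMap.range (dh0 : Wh0 →ₗ[ℝ] Wh1)).topologicalClosure, i1 x ∈ B := by
    intro x hx
    have : i1 x ∈ closure (B : Set W1) := by
      refine map_mem_closure i1.continuous hx ?_
      rintro _ ⟨w, rfl⟩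
      rw [ContinuousLinearMap.coe_coe, hid]
      exact Submodule.le_topologicalClosure _ ⟨i0 w, rfl⟩
    rwa [hBclosed.closure_eq] at this
  have hπ1B : ∀ x ∈ B, π1 x ∈ (LinearMap.range (dh0 : Wh0 →ₗ[ℝ] Wh1)).topologicalClosure := by
    intro x hx
    have : π1 x ∈ closure ((LinearMap.range (dh0 : Wh0 →ₗ[ℝ] Wh1)).topologicalClosure : Set Wh1) := by
      refine map_mem_closure π1.continuous hx ?_
      rintro _ ⟨w, rfl⟩
      rw [ContinuousLinearMap.coe_coe, hπd]
      exact Submodule.le_topologicalClosure _ ⟨π0 w, rfl⟩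
    rwa [(LinearMap.range (dh0 : Wh0 →ₗ[ℝ] Wh1)).isClosed_topologicalClosure.closure_eq] at this
  have hBker : B ≤ LinearMap.ker (d1 : W1 →ₗ[ℝ] W2) := by
    refine Submodule.topologicalClosure_minimal _ ?_ (ContinuousLinearMap.isClosed_ker d1)
    rintro _ ⟨w, rfl⟩
    exact hdd w
  obtain ⟨b, hb, q, hq, hzbq⟩ := B.exists_add_mem_mem_orthogonal z
  have hqZ : q ∈ LinearMap.ker (d1 : W1 →ₗ[ℝ] W2) := by
    have hq' : q = z - b := by rw [hzbq]; abel
    rw [hq']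
    exact sub_mem hz (hBker hb)
  have hq0 : q = 0 := by
    by_contra hne
    have hlt := hH q ⟨hqZ, hq⟩ hne
    have hb' : i1 (π1 q) ∈ B := by
      have h1 : i1 (π1 z) ∈ B := hi1B _ hπz
      have h2 : i1 (π1 b) ∈ B := hi1B _ (hπ1B _ hb)
      have hq'' : π1 q = π1 z - π1 b := by rw [hzbq]; simp
      rw [hq'', map_sub]
      exact sub_mem h1 h2
    have hinner : inner ℝ q (i1 (π1 q)) = (0 : ℝ) := by
      rw [real_inner_comm]
      exact hq _ hb'
    have hsq : ‖q - i1 (π1 q)‖ ^ 2 = ‖q‖ ^ 2 + ‖i1 (π1 q)‖ ^ 2 := by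
      rw [norm_sub_sq_real, hinner]; ring
    nlinarith [norm_nonneg (q - i1 (π1 q)), norm_nonneg q, sq_nonneg ‖i1 (π1 q)‖]
  rw [hzbq, hq0, add_zero]
  exact hb
end

section
/- Let W¹, W², Wₕ¹, Wₕ² be real Hilbert spaces with continuous linear maps d : W¹ → W², dₕ : Wₕ¹ → Wₕ², i¹ : Wₕ¹ → W¹, i² : Wₕ² → W², π¹ : W¹ → Wₕ¹, π² : W² → Wₕ² satisfying π² ∘ i² = id, d ∘ i¹ = i² ∘ dₕ, and dₕ ∘ π¹ = π² ∘ d. Suppose there is a constant c_P > 0 such that ‖v‖ ≤ c_P · ‖d v‖ for all v ∈ (ker d)^⊥. Then ‖vₕ‖ ≤ c_P · ‖π¹‖ · ‖i²‖ · ‖dₕ vₕ‖ for all vₕ ∈ (ker dₕ)^⊥. -/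
/-- Discrete Poincaré inequality: the Poincaré constant of the approximating complex
`(Wₕ, dₕ)` is bounded by `c_P * ‖π¹‖ * ‖i²‖` where `c_P` is the Poincaré constant of
`(W, d)`. -/
theorem discrete_poincare_inequality
    {W1 W2 Wh1 Wh2 : Type*}
    [NormedAddCommGroup W1] [InnerProductSpace ℝ W1] [CompleteSpace W1]
    [NormedAddCommGroup W2] [InnerProductSpace ℝ W2] [CompleteSpace W2]
    [NormedAddCommGroup Wh1] [InnerProductSpace ℝ Wh1] [CompleteSpace Wh1]
    [NormedAddCommGroup Wh2] [InnerProductSpace ℝ Wh2] [CompleteSpace Wh2]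
    (d : W1 →L[ℝ] W2) (dh : Wh1 →L[ℝ] Wh2)
    (i1 : Wh1 →L[ℝ] W1) (i2 : Wh2 →L[ℝ] W2)
    (π1 : W1 →L[ℝ] Wh1) (π2 : W2 →L[ℝ] Wh2)
    (hπi : ∀ x : Wh2, π2 (i2 x) = x)
    (hid : ∀ x : Wh1, d (i1 x) = i2 (dh x))
    (hπd : ∀ x : W1, dh (π1 x) = π2 (d x))
    (c_P : ℝ) (hc : 0 < c_P)
    (hP : ∀ v ∈ (LinearMap.ker (d : W1 →ₗ[ℝ] W2))ᗮ, ‖v‖ ≤ c_P * ‖d v‖) :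
    ∀ vh ∈ (LinearMap.ker (dh : Wh1 →ₗ[ℝ] Wh2))ᗮ, ‖vh‖ ≤ c_P * ‖π1‖ * ‖i2‖ * ‖dh vh‖ := by
  intro vh hvh
  -- ker d is closed, hence has an orthogonal projection
  have hclosed : IsClosed ((LinearMap.ker (d : W1 →ₗ[ℝ] W2) : Submodule ℝ W1) : Set W1) := by
    have : (LinearMap.ker (d : W1 →ₗ[ℝ] W2) : Submodule ℝ W1) = LinearMap.ker (d : W1 →ₗ[ℝ] W2) := rfl
    exact ContinuousLinearMap.isClosed_ker d
  haveI : CompleteSpace (LinearMap.ker (d : W1 →ₗ[ℝ] W2) : Submodule ℝ W1) :=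
    hclosed.completeSpace_coe
  obtain ⟨z, hz, v, hv, hsum⟩ :=
    Submodule.exists_add_mem_mem_orthogonal (K := (LinearMap.ker (d : W1 →ₗ[ℝ] W2) : Submodule ℝ W1)) (i1 vh)
  have hdz : d z = 0 := hz
  have hdv : d v = i2 (dh vh) := by
    have : d (i1 vh) = d z + d v := by rw [hsum]; simp
    rw [hid] at this
    rw [hdz, zero_add] at this
    exact this.symm
  have hdhv : dh (π1 v) = dh vh := by
    rw [hπd, hdv, hπi]
  have hker : vh - π1 v ∈ LinearMap.ker (dh : Wh1 →ₗ[ℝ] Wh2) := by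
    simp [LinearMap.mem_ker, hdhv]
  have horth : inner ℝ vh (vh - π1 v) = (0 : ℝ) := by
    rw [real_inner_comm]
    exact (Submodule.mem_orthogonal (LinearMap.ker (dh : Wh1 →ₗ[ℝ] Wh2)) vh).mp hvh (vh - π1 v) hker
  have hnormsq : ‖vh‖ ^ 2 = inner ℝ vh (π1 v) := by
    have := horth
    rw [inner_sub_right, sub_eq_zero] at this
    rw [← real_inner_self_eq_norm_sq]
    exact this
  have hvnorm : ‖v‖ ≤ c_P * ‖i2‖ * ‖dh vh‖ := by
    calc ‖v‖ ≤ c_P * ‖d v‖ := hP v hv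
      _ = c_P * ‖i2 (dh vh)‖ := by rw [hdv]
      _ ≤ c_P * (‖i2‖ * ‖dh vh‖) := by
          exact mul_le_mul_of_nonneg_left (i2.le_opNorm _) hc.le
      _ = c_P * ‖i2‖ * ‖dh vh‖ := by ring
  have key : ‖vh‖ ^ 2 ≤ ‖vh‖ * (c_P * ‖π1‖ * ‖i2‖ * ‖dh vh‖) := by
    calc ‖vh‖ ^ 2 = inner ℝ vh (π1 v) := hnormsq
      _ ≤ ‖vh‖ * ‖π1 v‖ := real_inner_le_norm _ _
      _ ≤ ‖vh‖ * (‖π1‖ * ‖v‖) :=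
          mul_le_mul_of_nonneg_left (π1.le_opNorm _) (norm_nonneg _)
      _ ≤ ‖vh‖ * (‖π1‖ * (c_P * ‖i2‖ * ‖dh vh‖)) := by
          apply mul_le_mul_of_nonneg_left _ (norm_nonneg _)
          exact mul_le_mul_of_nonneg_left hvnorm (norm_nonneg _)
      _ = ‖vh‖ * (c_P * ‖π1‖ * ‖i2‖ * ‖dh vh‖) := by ring
  rcases eq_or_ne vh 0 with h0 | h0
  · simp [h0]
  · have hpos : 0 < ‖vh‖ := norm_pos_iff.mpr h0
    have := key
    rw [sq] at this
    exact le_of_mul_le_mul_left (by linarith [this]) hpos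
end

section
/- Let W⁰, W¹, W² be real Hilbert spaces and d⁰ : W⁰ → W¹, d¹ : W¹ → W² continuous linear maps with d¹ ∘ d⁰ = 0 and with range d⁰ closed. Set B := range d⁰, Z := ker d¹, and H := Z ∩ B^⊥. Then B, H, and Z^⊥ are pairwise orthogonal closed subspaces of W¹, and every w ∈ W¹ has a unique decomposition w = b + h + z with b ∈ B, h ∈ H, z ∈ Z^⊥; that is, W¹ = B ⊕ H ⊕ Z^⊥ as an internal orthogonal direct sum. -/
open RealInnerProductSpace

/-- Strong Hodge decomposition at a single degree of a closed Hilbert complex: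
`W¹ = B ⊕ H ⊕ Zᗮ` as an internal orthogonal direct sum, where `B = range d⁰` (closed),
`Z = ker d¹`, and `H = Z ⊓ Bᗮ`. -/
theorem strong_hodge_decomposition
    {W0 W1 W2 : Type*}
    [NormedAddCommGroup W0] [InnerProductSpace ℝ W0] [CompleteSpace W0]
    [NormedAddCommGroup W1] [InnerProductSpace ℝ W1] [CompleteSpace W1]
    [NormedAddCommGroup W2] [InnerProductSpace ℝ W2] [CompleteSpace W2]
    (d0 : W0 →L[ℝ] W1) (d1 : W1 →L[ℝ] W2)
    (hdd : ∀ x : W0, d1 (d0 x) = 0)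
    (hB : IsClosed (LinearMap.range (d0 : W0 →ₗ[ℝ] W1) : Set W1)) :
    (IsClosed (LinearMap.range (d0 : W0 →ₗ[ℝ] W1) : Set W1) ∧
      IsClosed ((LinearMap.ker (d1 : W1 →ₗ[ℝ] W2) ⊓ (LinearMap.range (d0 : W0 →ₗ[ℝ] W1))ᗮ : Submodule ℝ W1) : Set W1) ∧
      IsClosed (((LinearMap.ker (d1 : W1 →ₗ[ℝ] W2))ᗮ : Submodule ℝ W1) : Set W1)) ∧
    (∀ b ∈ LinearMap.range (d0 : W0 →ₗ[ℝ] W1), ∀ h ∈ LinearMap.ker (d1 : W1 →ₗ[ℝ] W2) ⊓ (LinearMap.range (d0 : W0 →ₗ[ℝ] W1))ᗮ,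
      ⟪b, h⟫ = 0) ∧
    (∀ b ∈ LinearMap.range (d0 : W0 →ₗ[ℝ] W1), ∀ z ∈ (LinearMap.ker (d1 : W1 →ₗ[ℝ] W2))ᗮ, ⟪b, z⟫ = 0) ∧
    (∀ h ∈ LinearMap.ker (d1 : W1 →ₗ[ℝ] W2) ⊓ (LinearMap.range (d0 : W0 →ₗ[ℝ] W1))ᗮ, ∀ z ∈ (LinearMap.ker (d1 : W1 →ₗ[ℝ] W2))ᗮ,
      ⟪h, z⟫ = 0) ∧
    (∀ w : W1, ∃! t : W1 × W1 × W1,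
      t.1 ∈ LinearMap.range (d0 : W0 →ₗ[ℝ] W1) ∧
      t.2.1 ∈ LinearMap.ker (d1 : W1 →ₗ[ℝ] W2) ⊓ (LinearMap.range (d0 : W0 →ₗ[ℝ] W1))ᗮ ∧
      t.2.2 ∈ (LinearMap.ker (d1 : W1 →ₗ[ℝ] W2))ᗮ ∧
      w = t.1 + t.2.1 + t.2.2) := by
  set B : Submodule ℝ W1 := LinearMap.range (d0 : W0 →ₗ[ℝ] W1) with hBdef
  set Z : Submodule ℝ W1 := LinearMap.ker (d1 : W1 →ₗ[ℝ] W2) with hZdef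
  have hBZ : B ≤ Z := by
    rintro x ⟨y, rfl⟩
    exact hdd y
  have hZc : IsClosed (Z : Set W1) := ContinuousLinearMap.isClosed_ker d1
  -- orthogonality lemmas
  have obh : ∀ b ∈ B, ∀ h ∈ Z ⊓ Bᗮ, ⟪b, h⟫ = 0 := fun b hb h hh =>
    real_inner_comm b h ▸ hh.2 b hb
  have obz : ∀ b ∈ B, ∀ z ∈ Zᗮ, ⟪b, z⟫ = 0 := fun b hb z hz =>
    real_inner_comm b z ▸ hz b (hBZ hb)
  have ohz : ∀ h ∈ Z ⊓ Bᗮ, ∀ z ∈ Zᗮ, ⟪h, z⟫ = 0 := fun h hh z hz =>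
    real_inner_comm h z ▸ hz h hh.1
  refine ⟨⟨hB, ?_, Submodule.isClosed_orthogonal _⟩, obh, obz, ohz, ?_⟩
  · exact hZc.inter (Submodule.isClosed_orthogonal B)
  intro w
  haveI : CompleteSpace B := hB.completeSpace_coe
  haveI : CompleteSpace Z := hZc.completeSpace_coe
  set z : W1 := (Z.orthogonalProjectionOnto w : W1) with hz
  set b : W1 := (B.orthogonalProjectionOnto z : W1) with hb
  have hzmem : z ∈ Z := (Z.orthogonalProjectionOnto w).2
  have hbmem : b ∈ B := (B.orthogonalProjectionOnto z).2
  have hwz : w - z ∈ Zᗮ := Z.sub_starProjection_mem_orthogonal w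
  have hzb : z - b ∈ Bᗮ := B.sub_starProjection_mem_orthogonal z
  refine ⟨⟨b, z - b, w - z⟩, ⟨hbmem, ⟨Z.sub_mem hzmem (hBZ hbmem), hzb⟩, hwz, by module⟩, ?_⟩
  rintro ⟨b', h', z'⟩ ⟨hb', hh', hz', hw'⟩
  -- uniqueness
  have hsum : (b' - b) + (h' - (z - b)) + (z' - (w - z)) = 0 := by
    have : b' + h' + z' = b + (z - b) + (w - z) := by rw [← hw']; abel
    have := this
    abel_nf
    abel_nf at this
    linear_combination (norm := abel_nf) this
  set u := b' - b with hu
  set v := h' - (z - b) with hv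
  set x := z' - (w - z) with hx
  have humem : u ∈ B := B.sub_mem hb' hbmem
  have hvmem : v ∈ Z ⊓ Bᗮ := ⟨Z.sub_mem hh'.1 (Z.sub_mem hzmem (hBZ hbmem)),
    Bᗮ.sub_mem hh'.2 hzb⟩
  have hxmem : x ∈ Zᗮ := Zᗮ.sub_mem hz' hwz
  have hu0 : u = 0 := by
    have : ⟪u, u⟫ = 0 := by
      have := congrArg (fun y => ⟪u, y⟫) hsum
      simpa [inner_add_right, obh u humem v hvmem, obz u humem x hxmem] using this
    exact inner_self_eq_zero.mp this
  have hv0 : v = 0 := by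
    have : ⟪v, v⟫ = 0 := by
      have := congrArg (fun y => ⟪v, y⟫) hsum
      have h1 : ⟪v, u⟫ = 0 := real_inner_comm v u ▸ obh u humem v hvmem
      simpa [inner_add_right, h1, ohz v hvmem x hxmem] using this
    exact inner_self_eq_zero.mp this
  have hx0 : x = 0 := by
    have : ⟪x, x⟫ = 0 := by
      have := congrArg (fun y => ⟪x, y⟫) hsum
      have h1 : ⟪x, u⟫ = 0 := real_inner_comm x u ▸ obz u humem x hxmem
      have h2 : ⟪x, v⟫ = 0 := real_inner_comm x v ▸ ohz v hvmem x hxmem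
      simpa [inner_add_right, h1, h2] using this
    exact inner_self_eq_zero.mp this
  have e1 : b' = b := by have := sub_eq_zero.mp hu0; exact this
  have e2 : h' = z - b := sub_eq_zero.mp hv0
  have e3 : z' = w - z := sub_eq_zero.mp hx0
  simp [e1, e2, e3]
end

section
/- Let W⁰, W¹, W² be real Hilbert spaces and d⁰ : W⁰ → W¹, d¹ : W¹ → W² continuous linear maps with d¹ ∘ d⁰ = 0 and closed ranges, and let H := ker d¹ ∩ (range d⁰)^⊥. Then there exists a constant c > 0 such that for every f ∈ W¹ there exists a unique triple (σ, u, p) ∈ W⁰ × W¹ × H satisfying (i) ⟪σ, τ⟫ − ⟪u, d⁰τ⟫ = 0 for all τ ∈ W⁰; (ii) ⟪d⁰σ, v⟫ + ⟪d¹u, d¹v⟫ + ⟪p, v⟫ = ⟪f, v⟫ for all v ∈ W¹; (iii) ⟪u, q⟫ = 0 for all q ∈ H; and moreover this solution satisfies ‖σ‖_V + ‖u‖_V + ‖p‖ ≤ c · ‖f‖, where ‖σ‖_V := (‖σ‖² + ‖d⁰σ‖²)^{1/2} and ‖u‖_V := (‖u‖² + ‖d¹u‖²)^{1/2}. -/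
open RealInnerProductSpace

theorem sqrt_sq_add_sq_le' {a b : ℝ} (ha : 0 ≤ a) (hb : 0 ≤ b) :
    Real.sqrt (a ^ 2 + b ^ 2) ≤ a + b := by
  have h : a ^ 2 + b ^ 2 ≤ (a + b) ^ 2 := by nlinarith
  calc Real.sqrt (a ^ 2 + b ^ 2) ≤ Real.sqrt ((a + b) ^ 2) := Real.sqrt_le_sqrt h
    _ = a + b := by rw [Real.sqrt_sq (by linarith)]

theorem laxMilgram_TstarT {V W : Type*}
    [NormedAddCommGroup V] [InnerProductSpace ℝ V] [CompleteSpace V]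
    [NormedAddCommGroup W] [InnerProductSpace ℝ W]
    (T : V →L[ℝ] W) {c : ℝ} (hc : 0 < c) (hbelow : ∀ v, c * ‖v‖ ≤ ‖T v‖)
    (F : V →L[ℝ] ℝ) : ∃ u : V, ∀ v : V, ⟪T u, T v⟫ = F v := by
  let bl : V →ₗ[ℝ] V →ₗ[ℝ] ℝ := LinearMap.mk₂ ℝ (fun u v => ⟪T u, T v⟫)
    (fun m₁ m₂ n => by simp [inner_add_left])
    (fun cc m n => by simp [real_inner_smul_left])
    (fun m n₁ n₂ => by simp [inner_add_right])
    (fun cc m n => by simp [real_inner_smul_right])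
  have hb : ∀ u v : V, ‖bl u v‖ ≤ (‖T‖ * ‖T‖) * ‖u‖ * ‖v‖ := by
    intro u v
    calc ‖bl u v‖ ≤ ‖T u‖ * ‖T v‖ := by
          simpa [bl] using abs_real_inner_le_norm (T u) (T v)
      _ ≤ (‖T‖ * ‖u‖) * (‖T‖ * ‖v‖) := by
          have h1 := T.le_opNorm u
          have h2 := T.le_opNorm v
          exact mul_le_mul h1 h2 (norm_nonneg _) (by positivity)
      _ = ‖T‖ * ‖T‖ * ‖u‖ * ‖v‖ := by ring
  let b : V →L[ℝ] V →L[ℝ] ℝ := LinearMap.mkContinuous₂ bl (‖T‖ * ‖T‖) hb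
  have hbapp : ∀ u v : V, b u v = ⟪T u, T v⟫ := fun u v => rfl
  have hcoer : IsCoercive b := by
    refine ⟨c ^ 2, by positivity, fun u => ?_⟩
    have h1 := hbelow u
    have h2 : b u u = ‖T u‖ ^ 2 := by
      rw [hbapp, real_inner_self_eq_norm_sq]
    rw [h2]
    nlinarith [mul_le_mul h1 h1 (by positivity) (norm_nonneg (T u)), sq_nonneg ‖u‖]
  let rf := (InnerProductSpace.toDual ℝ V).symm F
  refine ⟨hcoer.continuousLinearEquivOfBilin.symm rf, fun v => ?_⟩
  have h1 := hcoer.continuousLinearEquivOfBilin_apply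
    (hcoer.continuousLinearEquivOfBilin.symm rf) v
  rw [ContinuousLinearEquiv.apply_symm_apply] at h1
  have h2 : ⟪rf, v⟫ = F v := InnerProductSpace.toDual_symm_apply
  rw [← hbapp, ← h1, h2]

set_option maxHeartbeats 1000000 in
/-- Well-posedness of the mixed formulation of the abstract Hodge Laplacian on a
bounded closed Hilbert complex: for every `f` there is a unique solution `(σ, u, p)`,
and it satisfies `‖σ‖_V + ‖u‖_V + ‖p‖ ≤ c ‖f‖`. -/
theorem mixed_hodge_laplacian_well_posed
    {W0 W1 W2 : Type*}
    [NormedAddCommGroup W0] [InnerProductSpace ℝ W0] [CompleteSpace W0]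
    [NormedAddCommGroup W1] [InnerProductSpace ℝ W1] [CompleteSpace W1]
    [NormedAddCommGroup W2] [InnerProductSpace ℝ W2] [CompleteSpace W2]
    (d0 : W0 →L[ℝ] W1) (d1 : W1 →L[ℝ] W2)
    (hdd : ∀ x : W0, d1 (d0 x) = 0)
    (hB0 : IsClosed (LinearMap.range (d0 : W0 →ₗ[ℝ] W1) : Set W1))
    (hB1 : IsClosed (LinearMap.range (d1 : W1 →ₗ[ℝ] W2) : Set W2)) :
    ∃ c : ℝ, 0 < c ∧ ∀ f : W1,
      (∃! t : W0 × W1 × W1,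
        t.2.2 ∈ LinearMap.ker (d1 : W1 →ₗ[ℝ] W2) ⊓ (LinearMap.range (d0 : W0 →ₗ[ℝ] W1))ᗮ ∧
        (∀ τ : W0, ⟪t.1, τ⟫ - ⟪t.2.1, d0 τ⟫ = 0) ∧
        (∀ v : W1, ⟪d0 t.1, v⟫ + ⟪d1 t.2.1, d1 v⟫ + ⟪t.2.2, v⟫ = ⟪f, v⟫) ∧
        (∀ q ∈ LinearMap.ker (d1 : W1 →ₗ[ℝ] W2) ⊓ (LinearMap.range (d0 : W0 →ₗ[ℝ] W1))ᗮ,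
          ⟪t.2.1, q⟫ = 0)) ∧
      (∀ σ : W0, ∀ u : W1,
        ∀ p ∈ LinearMap.ker (d1 : W1 →ₗ[ℝ] W2) ⊓ (LinearMap.range (d0 : W0 →ₗ[ℝ] W1))ᗮ,
        (∀ τ : W0, ⟪σ, τ⟫ - ⟪u, d0 τ⟫ = 0) →
        (∀ v : W1, ⟪d0 σ, v⟫ + ⟪d1 u, d1 v⟫ + ⟪p, v⟫ = ⟪f, v⟫) →
        (∀ q ∈ LinearMap.ker (d1 : W1 →ₗ[ℝ] W2) ⊓ (LinearMap.range (d0 : W0 →ₗ[ℝ] W1))ᗮ,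
          ⟪u, q⟫ = 0) →
        Real.sqrt (‖σ‖ ^ 2 + ‖d0 σ‖ ^ 2) + Real.sqrt (‖u‖ ^ 2 + ‖d1 u‖ ^ 2) + ‖p‖ ≤
          c * ‖f‖) := by
  classical
  set A' : W1 →L[ℝ] W0 := ContinuousLinearMap.adjoint d0 with hA'def
  set Bs : Submodule ℝ W1 := LinearMap.range (d0 : W0 →ₗ[ℝ] W1) with hBsdef
  set Z : Submodule ℝ W1 := LinearMap.ker (d1 : W1 →ₗ[ℝ] W2) with hZdef
  set Hs : Submodule ℝ W1 := Z ⊓ Bsᗮ with hHsdef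
  set Zp : Submodule ℝ W1 := Zᗮ with hZpdef
  haveI : CompleteSpace Bs := hB0.completeSpace_coe
  have hZcl : IsClosed (Z : Set W1) := ContinuousLinearMap.isClosed_ker d1
  haveI : CompleteSpace Z := hZcl.completeSpace_coe
  haveI : CompleteSpace Zp := Z.isClosed_orthogonal.completeSpace_coe
  have hHscl : IsClosed (Hs : Set W1) := by
    have h : (Hs : Set W1) = (Z : Set W1) ∩ (Bsᗮ : Set W1) := rfl
    rw [h]; exact hZcl.inter Bs.isClosed_orthogonal
  haveI : CompleteSpace Hs := hHscl.completeSpace_coe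
  have hBZ : ∀ x ∈ Bs, x ∈ Z := by
    rintro x ⟨y, rfl⟩
    exact LinearMap.mem_ker.mpr (hdd y)
  have hHZ : Hs ≤ Z := inf_le_left
  have hHB : Hs ≤ Bsᗮ := inf_le_right
  -- Poincaré constant for d0
  obtain ⟨C0, hC0pos, hC0⟩ :
      ∃ C0 > 0, ∀ y : W1, y ∈ Bs → ∃ x : W0, d0 x = y ∧ ‖x‖ ≤ C0 * ‖y‖ := by
    let d0' : W0 →L[ℝ] Bs := d0.codRestrict Bs (fun x => LinearMap.mem_range_self (d0 : W0 →ₗ[ℝ] W1) x)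
    have hsurj : Function.Surjective d0' := by
      rintro ⟨y, x, rfl⟩
      exact ⟨x, rfl⟩
    obtain ⟨C, hCpos, hC⟩ := d0'.exists_preimage_norm_le hsurj
    refine ⟨C, hCpos, fun y hy => ?_⟩
    obtain ⟨x, hx, hx2⟩ := hC ⟨y, hy⟩
    exact ⟨x, congrArg Subtype.val hx, by simpa using hx2⟩
  -- Poincaré constant for d1
  obtain ⟨C1, hC1pos, hC1⟩ : ∃ C1 > 0, ∀ u : W1, u ∈ Zp → ‖u‖ ≤ C1 * ‖d1 u‖ := by
    haveI : CompleteSpace (LinearMap.range (d1 : W1 →ₗ[ℝ] W2)) := hB1.completeSpace_coe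
    let d1' : W1 →L[ℝ] LinearMap.range (d1 : W1 →ₗ[ℝ] W2) :=
      d1.codRestrict _ (fun x => LinearMap.mem_range_self (d1 : W1 →ₗ[ℝ] W2) x)
    have hsurj : Function.Surjective d1' := by
      rintro ⟨y, x, rfl⟩
      exact ⟨x, rfl⟩
    obtain ⟨C, hCpos, hC⟩ := d1'.exists_preimage_norm_le hsurj
    refine ⟨C, hCpos, fun u hu => ?_⟩
    obtain ⟨x, hx, hx2⟩ := hC ⟨d1 u, LinearMap.mem_range_self (d1 : W1 →ₗ[ℝ] W2) u⟩
    have hx' : d1 x = d1 u := congrArg Subtype.val hx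
    have hxn : ‖x‖ ≤ C * ‖d1 u‖ := by simpa using hx2
    have h1 : u - x ∈ Z := by
      rw [hZdef, LinearMap.mem_ker, ContinuousLinearMap.coe_coe, map_sub, hx', sub_self]
    have h2 : ⟪u, u - x⟫ = 0 := (Submodule.mem_orthogonal' Z u).mp hu _ h1
    have h3 : ⟪u, u⟫ = ⟪u, x⟫ := by
      rw [inner_sub_right] at h2; linarith
    have h4 : ‖u‖ * ‖u‖ ≤ ‖u‖ * ‖x‖ := by
      calc ‖u‖ * ‖u‖ = ⟪u, u⟫ := (real_inner_self_eq_norm_mul_norm u).symm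
        _ = ⟪u, x⟫ := h3
        _ ≤ ‖u‖ * ‖x‖ := real_inner_le_norm u x
    rcases (norm_nonneg u).eq_or_lt with h0 | h0
    · rw [← h0]; positivity
    · have h5 : ‖u‖ ≤ ‖x‖ := le_of_mul_le_mul_left h4 h0
      linarith
  -- orthogonal decomposition of W1
  have hdecomp : ∀ v : W1, v = (Submodule.orthogonalProjection Bs v : W1) +
      (Submodule.orthogonalProjection Hs v : W1) + (Submodule.orthogonalProjection Zp v : W1) := by
    intro v
    have hrB : v - (Submodule.orthogonalProjection Bs v : W1) - (Submodule.orthogonalProjection Hs v : W1)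
        - (Submodule.orthogonalProjection Zp v : W1) ∈ Bsᗮ := by
      rw [Submodule.mem_orthogonal']
      intro b hb
      have e1 : ⟪v - (Submodule.orthogonalProjection Bs v : W1), b⟫ = 0 :=
        Submodule.starProjection_inner_eq_zero (K := Bs) v b hb
      have e2 : ⟪((Submodule.orthogonalProjection Hs v : W1)), b⟫ = 0 :=
        (Submodule.mem_orthogonal' _ _).mp (hHB (Submodule.orthogonalProjection Hs v).2) b hb
      have e3 : ⟪((Submodule.orthogonalProjection Zp v : W1)), b⟫ = 0 :=
        (Submodule.mem_orthogonal' _ _).mp (Submodule.orthogonalProjection Zp v).2 b (hBZ b hb)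
      simp only [inner_sub_left] at e1 ⊢
      linarith
    have hrH : v - (Submodule.orthogonalProjection Bs v : W1) - (Submodule.orthogonalProjection Hs v : W1)
        - (Submodule.orthogonalProjection Zp v : W1) ∈ Hsᗮ := by
      rw [Submodule.mem_orthogonal']
      intro q hq
      have e1 : ⟪v - (Submodule.orthogonalProjection Hs v : W1), q⟫ = 0 :=
        Submodule.starProjection_inner_eq_zero (K := Hs) v q hq
      have e2 : ⟪((Submodule.orthogonalProjection Bs v : W1)), q⟫ = 0 :=
        (Submodule.mem_orthogonal _ _).mp (hHB hq) _ (Submodule.orthogonalProjection Bs v).2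
      have e3 : ⟪((Submodule.orthogonalProjection Zp v : W1)), q⟫ = 0 :=
        (Submodule.mem_orthogonal' _ _).mp (Submodule.orthogonalProjection Zp v).2 q (hHZ hq)
      simp only [inner_sub_left] at e1 ⊢
      linarith
    have hrZp : v - (Submodule.orthogonalProjection Bs v : W1) - (Submodule.orthogonalProjection Hs v : W1)
        - (Submodule.orthogonalProjection Zp v : W1) ∈ Zpᗮ := by
      rw [Submodule.mem_orthogonal']
      intro w hw
      have e1 : ⟪v - (Submodule.orthogonalProjection Zp v : W1), w⟫ = 0 :=
        Submodule.starProjection_inner_eq_zero (K := Zp) v w hw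
      have e2 : ⟪((Submodule.orthogonalProjection Bs v : W1)), w⟫ = 0 :=
        (Submodule.mem_orthogonal _ _).mp hw _ (hBZ _ (Submodule.orthogonalProjection Bs v).2)
      have e3 : ⟪((Submodule.orthogonalProjection Hs v : W1)), w⟫ = 0 :=
        (Submodule.mem_orthogonal _ _).mp hw _ (hHZ (Submodule.orthogonalProjection Hs v).2)
      simp only [inner_sub_left] at e1 ⊢
      linarith
    have hrZ : v - (Submodule.orthogonalProjection Bs v : W1) - (Submodule.orthogonalProjection Hs v : W1)
        - (Submodule.orthogonalProjection Zp v : W1) ∈ Z :=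
      (SetLike.ext_iff.mp Z.orthogonal_orthogonal _).mp hrZp
    have hr0 : v - (Submodule.orthogonalProjection Bs v : W1) - (Submodule.orthogonalProjection Hs v : W1)
        - (Submodule.orthogonalProjection Zp v : W1) = 0 := by
      have hmem : v - (Submodule.orthogonalProjection Bs v : W1) - (Submodule.orthogonalProjection Hs v : W1)
          - (Submodule.orthogonalProjection Zp v : W1) ∈ Hs := ⟨hrZ, hrB⟩
      exact (inner_self_eq_zero (𝕜 := ℝ)).mp ((Submodule.mem_orthogonal' _ _).mp hrH _ hmem)
    rw [sub_sub, sub_sub, sub_eq_zero] at hr0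
    conv_lhs => rw [hr0]
    abel
  -- the constant
  set K := max C0 C1 with hKdef
  have hK0 : (0:ℝ) < K := lt_of_lt_of_le hC0pos (le_max_left _ _)
  refine ⟨10 * (K + 1) ^ 2, by positivity, fun f => ?_⟩
  constructor
  · -- existence and uniqueness
    have hTB : ∀ v : Bs, (1 / C0) * ‖v‖ ≤ ‖(A'.comp Bs.subtypeL) v‖ := by
      intro v
      rcases (norm_nonneg v).eq_or_lt with h0 | h0
      · rw [← h0, mul_zero]; exact norm_nonneg _
      obtain ⟨x, hx, hxn⟩ := hC0 v v.2
      have e1 : ⟪A' (v : W1), x⟫ = ⟪(v : W1), d0 x⟫ := by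
        rw [hA'def]; exact ContinuousLinearMap.adjoint_inner_left d0 x (v : W1)
      have hxn' : ‖x‖ ≤ C0 * ‖(v : W1)‖ := hxn
      have e2 : ‖(v : W1)‖ * ‖(v : W1)‖ ≤ ‖A' (v : W1)‖ * (C0 * ‖(v : W1)‖) := by
        calc ‖(v : W1)‖ * ‖(v : W1)‖ = ⟪(v : W1), (v : W1)⟫ :=
              (real_inner_self_eq_norm_mul_norm _).symm
          _ = ⟪(v : W1), d0 x⟫ := by rw [hx]
          _ = ⟪A' (v : W1), x⟫ := e1.symm
          _ ≤ ‖A' (v : W1)‖ * ‖x‖ := real_inner_le_norm _ _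
          _ ≤ ‖A' (v : W1)‖ * (C0 * ‖(v : W1)‖) :=
              mul_le_mul_of_nonneg_left hxn' (norm_nonneg _)
      have hvn : ‖v‖ = ‖(v : W1)‖ := rfl
      have h0' : (0 : ℝ) < ‖(v : W1)‖ := by rw [← hvn]; exact h0
      have e3 : ‖(v : W1)‖ ≤ ‖A' (v : W1)‖ * C0 :=
        le_of_mul_le_mul_right (by nlinarith) h0'
      have e4 : ‖(A'.comp Bs.subtypeL) v‖ = ‖A' (v : W1)‖ := rfl
      rw [e4, hvn, div_mul_eq_mul_div, div_le_iff₀ hC0pos]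
      linarith
    obtain ⟨uB, huB⟩ := laxMilgram_TstarT (A'.comp Bs.subtypeL)
      (by positivity : (0:ℝ) < 1 / C0) hTB ((innerSL ℝ f).comp Bs.subtypeL)
    have hTZ : ∀ v : Zp, (1 / C1) * ‖v‖ ≤ ‖(d1.comp Zp.subtypeL) v‖ := by
      intro v
      have h1 := hC1 (v : W1) v.2
      have hvn : ‖v‖ = ‖(v : W1)‖ := rfl
      have e4 : ‖(d1.comp Zp.subtypeL) v‖ = ‖d1 (v : W1)‖ := rfl
      rw [e4, hvn, div_mul_eq_mul_div, div_le_iff₀ hC1pos]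
      linarith
    obtain ⟨uP, huP⟩ := laxMilgram_TstarT (d1.comp Zp.subtypeL)
      (by positivity : (0:ℝ) < 1 / C1) hTZ ((innerSL ℝ f).comp Zp.subtypeL)
    have hA'uP : A' (uP : W1) = 0 := by
      have h1 : ∀ τ : W0, ⟪A' (uP : W1), τ⟫ = 0 := by
        intro τ
        rw [hA'def, ContinuousLinearMap.adjoint_inner_left]
        exact (Submodule.mem_orthogonal' Z _).mp uP.2 (d0 τ) (hBZ _ ⟨τ, rfl⟩)
      exact (inner_self_eq_zero (𝕜 := ℝ)).mp (h1 (A' (uP : W1)))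
    have hσ0B : A' ((uB : W1) + (uP : W1)) = A' (uB : W1) := by
      rw [map_add, hA'uP, add_zero]
    have hd1uB : d1 (uB : W1) = 0 := LinearMap.mem_ker.mp (hBZ _ uB.2)
    have hp0mem : (Submodule.orthogonalProjection Hs f : W1) ∈ Hs := (Submodule.orthogonalProjection Hs f).2
    have hi0 : ∀ τ : W0, ⟪A' ((uB : W1) + (uP : W1)), τ⟫
        - ⟪(uB : W1) + (uP : W1), d0 τ⟫ = 0 := by
      intro τ
      rw [hA'def, ContinuousLinearMap.adjoint_inner_left, sub_self]
    have hii0 : ∀ v : W1, ⟪d0 (A' ((uB : W1) + (uP : W1))), v⟫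
        + ⟪d1 ((uB : W1) + (uP : W1)), d1 v⟫
        + ⟪(Submodule.orthogonalProjection Hs f : W1), v⟫ = ⟪f, v⟫ := by
      intro v
      have t1 : ⟪d0 (A' ((uB : W1) + (uP : W1))), v⟫ = ⟪f, (Submodule.orthogonalProjection Bs v : W1)⟫ := by
        have e1 : ⟪d0 (A' ((uB : W1) + (uP : W1))), v - (Submodule.orthogonalProjection Bs v : W1)⟫ = 0 :=
          (Submodule.mem_orthogonal Bs _).mp (Submodule.sub_starProjection_mem_orthogonal v)
            _ ⟨A' ((uB : W1) + (uP : W1)), rfl⟩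
        have e2 : ⟪d0 (A' ((uB : W1) + (uP : W1))), v⟫
            = ⟪d0 (A' ((uB : W1) + (uP : W1))), (Submodule.orthogonalProjection Bs v : W1)⟫ := by
          rw [inner_sub_right] at e1; linarith
        have e3 : ⟪d0 (A' ((uB : W1) + (uP : W1))), (Submodule.orthogonalProjection Bs v : W1)⟫
            = ⟪A' ((uB : W1) + (uP : W1)), A' (Submodule.orthogonalProjection Bs v : W1)⟫ := by
          conv_rhs => rw [hA'def]
          exact (ContinuousLinearMap.adjoint_inner_right d0 _ _).symm
        have e5 := huB (Submodule.orthogonalProjection Bs v)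
        have e6 : ⟪A' (uB : W1), A' (Submodule.orthogonalProjection Bs v : W1)⟫
            = ⟪f, (Submodule.orthogonalProjection Bs v : W1)⟫ := by
          simpa using e5
        rw [e2, e3, hσ0B, e6]
      have t2 : ⟪d1 ((uB : W1) + (uP : W1)), d1 v⟫
          = ⟪f, (Submodule.orthogonalProjection Zp v : W1)⟫ := by
        have e1 : d1 ((uB : W1) + (uP : W1)) = d1 (uP : W1) := by
          rw [map_add, hd1uB, zero_add]
        have e2 : v - (Submodule.orthogonalProjection Zp v : W1) ∈ Z :=
          (SetLike.ext_iff.mp Z.orthogonal_orthogonal _).mp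
            (Submodule.sub_starProjection_mem_orthogonal v)
        have e3 : d1 v = d1 (Submodule.orthogonalProjection Zp v : W1) := by
          have h := LinearMap.mem_ker.mp e2
          rw [map_sub, sub_eq_zero] at h
          exact h
        have e5 := huP (Submodule.orthogonalProjection Zp v)
        have e6 : ⟪d1 (uP : W1), d1 (Submodule.orthogonalProjection Zp v : W1)⟫
            = ⟪f, (Submodule.orthogonalProjection Zp v : W1)⟫ := by
          simpa using e5
        rw [e1, e3, e6]
      have t3 : ⟪(Submodule.orthogonalProjection Hs f : W1), v⟫
          = ⟪f, (Submodule.orthogonalProjection Hs v : W1)⟫ :=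
        Submodule.inner_starProjection_left_eq_right Hs f v
      rw [t1, t2, t3, ← inner_add_right, ← inner_add_right]
      conv_rhs => rw [hdecomp v]
      congr 1
      abel
    have hiii0 : ∀ q ∈ Hs, ⟪(uB : W1) + (uP : W1), q⟫ = 0 := by
      intro q hq
      have e1 : ⟪(uB : W1), q⟫ = 0 :=
        (Submodule.mem_orthogonal Bs q).mp (hHB hq) _ uB.2
      have e2 : ⟪(uP : W1), q⟫ = 0 :=
        (Submodule.mem_orthogonal' Z _).mp uP.2 q (hHZ hq)
      rw [inner_add_left, e1, e2, add_zero]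
    -- uniqueness from the homogeneous problem
    have hzero : ∀ (σ : W0) (u p : W1), p ∈ Hs →
        (∀ τ : W0, ⟪σ, τ⟫ - ⟪u, d0 τ⟫ = 0) →
        (∀ v : W1, ⟪d0 σ, v⟫ + ⟪d1 u, d1 v⟫ + ⟪p, v⟫ = 0) →
        (∀ q ∈ Hs, ⟪u, q⟫ = 0) → σ = 0 ∧ u = 0 ∧ p = 0 := by
      intro σ u p hp hi hii hiii
      have h1 : ⟪u, d0 σ⟫ = ⟪σ, σ⟫ := by have := hi σ; linarith
      have h2 := hii u
      have e1 : ⟪d0 σ, u⟫ = ⟪σ, σ⟫ := by rw [real_inner_comm]; exact h1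
      have e2 : ⟪p, u⟫ = 0 := by rw [real_inner_comm]; exact hiii p hp
      have e3 : ⟪σ, σ⟫ + ⟪d1 u, d1 u⟫ = 0 := by rw [← e1]; linarith
      have nn1 : (0:ℝ) ≤ ⟪σ, σ⟫ := real_inner_self_nonneg
      have nn2 : (0:ℝ) ≤ ⟪d1 u, d1 u⟫ := real_inner_self_nonneg
      have hσ : σ = 0 := (inner_self_eq_zero (𝕜 := ℝ)).mp (by linarith)
      have hd1u : d1 u = 0 := (inner_self_eq_zero (𝕜 := ℝ)).mp (by linarith)
      have hpz : p = 0 := by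
        have h3 := hii p
        rw [hσ, map_zero, inner_zero_left, hd1u, inner_zero_left] at h3
        exact (inner_self_eq_zero (𝕜 := ℝ)).mp (by linarith)
      have huz : u = 0 := by
        have huB : u ∈ Bsᗮ := by
          rw [Submodule.mem_orthogonal]
          rintro b ⟨x, rfl⟩
          have h4 := hi x
          rw [hσ] at h4
          rw [real_inner_comm, ContinuousLinearMap.coe_coe]
          simp only [inner_zero_left] at h4
          linarith
        have huZ : u ∈ Z := LinearMap.mem_ker.mpr hd1u
        exact (inner_self_eq_zero (𝕜 := ℝ)).mp (hiii u ⟨huZ, huB⟩)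
      exact ⟨hσ, huz, hpz⟩
    refine ⟨(A' ((uB : W1) + (uP : W1)), (uB : W1) + (uP : W1),
      (Submodule.orthogonalProjection Hs f : W1)), ⟨hp0mem, hi0, hii0, hiii0⟩, ?_⟩
    rintro ⟨σ, u, p⟩ ⟨hp, hi, hii, hiii⟩
    obtain ⟨e1, e2, e3⟩ := hzero (σ - A' ((uB : W1) + (uP : W1)))
      (u - ((uB : W1) + (uP : W1))) (p - (Submodule.orthogonalProjection Hs f : W1))
      (Submodule.sub_mem Hs hp hp0mem)
      (fun τ => by
        have a1 := hi τ
        have a2 := hi0 τ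
        simp only [inner_sub_left]
        linarith)
      (fun v => by
        have a1 := hii v
        have a2 := hii0 v
        simp only [map_sub, inner_sub_left]
        linarith)
      (fun q hq => by
        have a1 := hiii q hq
        have a2 := hiii0 q hq
        simp only [inner_sub_left]
        linarith)
    simp only [Prod.mk.injEq]
    exact ⟨sub_eq_zero.mp e1, sub_eq_zero.mp e2, sub_eq_zero.mp e3⟩
  · -- the a priori estimate
    intro σ u p hp hi hii hiii
    have hfn : (0:ℝ) ≤ ‖f‖ := norm_nonneg f
    have hpZ : p ∈ Z := hp.1
    have hpB : p ∈ Bsᗮ := hp.2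
    have hpf : ‖p‖ ≤ ‖f‖ := by
      have h := hii p
      have e1 : ⟪d0 σ, p⟫ = 0 := (Submodule.mem_orthogonal Bs p).mp hpB _ ⟨σ, rfl⟩
      have e2 : d1 p = 0 := LinearMap.mem_ker.mp hpZ
      rw [e1, e2, inner_zero_right] at h
      have e3 : ‖p‖ * ‖p‖ ≤ ‖f‖ * ‖p‖ := by
        rw [← real_inner_self_eq_norm_mul_norm]
        calc ⟪p, p⟫ = ⟪f, p⟫ := by linarith
          _ ≤ ‖f‖ * ‖p‖ := real_inner_le_norm f p
      rcases (norm_nonneg p).eq_or_lt with h0 | h0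
      · rw [← h0]; exact hfn
      · exact le_of_mul_le_mul_right e3 h0
    have hdσf : ‖d0 σ‖ ≤ ‖f‖ := by
      have h := hii (d0 σ)
      have e1 : ⟪p, d0 σ⟫ = 0 := by
        rw [real_inner_comm]
        exact (Submodule.mem_orthogonal Bs p).mp hpB _ ⟨σ, rfl⟩
      have e2 : d1 (d0 σ) = 0 := hdd σ
      rw [e1, e2, inner_zero_right] at h
      have e3 : ‖d0 σ‖ * ‖d0 σ‖ ≤ ‖f‖ * ‖d0 σ‖ := by
        rw [← real_inner_self_eq_norm_mul_norm]
        calc ⟪d0 σ, d0 σ⟫ = ⟪f, d0 σ⟫ := by linarith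
          _ ≤ ‖f‖ * ‖d0 σ‖ := real_inner_le_norm _ _
      rcases (norm_nonneg (d0 σ)).eq_or_lt with h0 | h0
      · rw [← h0]; exact hfn
      · exact le_of_mul_le_mul_right e3 h0
    have hen : ‖σ‖ * ‖σ‖ + ‖d1 u‖ * ‖d1 u‖ ≤ ‖f‖ * ‖u‖ := by
      have h := hii u
      have e1 : ⟪d0 σ, u⟫ = ⟪σ, σ⟫ := by
        rw [real_inner_comm]
        have := hi σ; linarith
      have e2 : ⟪p, u⟫ = 0 := by rw [real_inner_comm]; exact hiii p hp
      have e3 := real_inner_le_norm f u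
      rw [e1, e2, add_zero] at h
      rw [← real_inner_self_eq_norm_mul_norm, ← real_inner_self_eq_norm_mul_norm]
      linarith
    have hub_norm : ‖(Submodule.orthogonalProjection Bs u : W1)‖ ≤ C0 * ‖σ‖ := by
      obtain ⟨x, hx, hxn⟩ := hC0 _ (Submodule.orthogonalProjection Bs u).2
      have e1 : ⟪u - (Submodule.orthogonalProjection Bs u : W1), (Submodule.orthogonalProjection Bs u : W1)⟫ = 0 :=
        (Submodule.mem_orthogonal' Bs _).mp (Submodule.sub_starProjection_mem_orthogonal u) _
          (Submodule.orthogonalProjection Bs u).2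
      have e2 : ⟪u, (Submodule.orthogonalProjection Bs u : W1)⟫
          = ⟪(Submodule.orthogonalProjection Bs u : W1), (Submodule.orthogonalProjection Bs u : W1)⟫ := by
        rw [inner_sub_left] at e1; linarith
      have e3 : ⟪u, d0 x⟫ = ⟪σ, x⟫ := by have := hi x; linarith
      have e4 : ‖(Submodule.orthogonalProjection Bs u : W1)‖ * ‖(Submodule.orthogonalProjection Bs u : W1)‖
          ≤ (C0 * ‖σ‖) * ‖(Submodule.orthogonalProjection Bs u : W1)‖ := by
        calc ‖(Submodule.orthogonalProjection Bs u : W1)‖ * ‖(Submodule.orthogonalProjection Bs u : W1)‖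
            = ⟪(Submodule.orthogonalProjection Bs u : W1), (Submodule.orthogonalProjection Bs u : W1)⟫ :=
              (real_inner_self_eq_norm_mul_norm _).symm
          _ = ⟪u, (Submodule.orthogonalProjection Bs u : W1)⟫ := e2.symm
          _ = ⟪σ, x⟫ := by rw [← hx]; exact e3
          _ ≤ ‖σ‖ * ‖x‖ := real_inner_le_norm _ _
          _ ≤ ‖σ‖ * (C0 * ‖(Submodule.orthogonalProjection Bs u : W1)‖) :=
              mul_le_mul_of_nonneg_left hxn (norm_nonneg σ)
          _ = (C0 * ‖σ‖) * ‖(Submodule.orthogonalProjection Bs u : W1)‖ := by ring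
      rcases (norm_nonneg ((Submodule.orthogonalProjection Bs u : W1))).eq_or_lt with h0 | h0
      · rw [← h0]; positivity
      · exact le_of_mul_le_mul_right e4 h0
    have hurZ : u - (Submodule.orthogonalProjection Bs u : W1) ∈ Zp := by
      rw [hZpdef, Submodule.mem_orthogonal']
      intro z hz
      have hzB : z - (Submodule.orthogonalProjection Bs z : W1) ∈ Hs := by
        constructor
        · have h1 : d1 z = 0 := LinearMap.mem_ker.mp hz
          have h2 : d1 (Submodule.orthogonalProjection Bs z : W1) = 0 :=
            LinearMap.mem_ker.mp (hBZ _ (Submodule.orthogonalProjection Bs z).2)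
          exact LinearMap.mem_ker.mpr (by rw [ContinuousLinearMap.coe_coe, map_sub, h1, h2, sub_zero])
        · exact Submodule.sub_starProjection_mem_orthogonal z
      have e1 : ⟪u - (Submodule.orthogonalProjection Bs u : W1), (Submodule.orthogonalProjection Bs z : W1)⟫ = 0 :=
        (Submodule.mem_orthogonal' Bs _).mp (Submodule.sub_starProjection_mem_orthogonal u) _
          (Submodule.orthogonalProjection Bs z).2
      have e2 : ⟪u - (Submodule.orthogonalProjection Bs u : W1), z - (Submodule.orthogonalProjection Bs z : W1)⟫
          = 0 := by
        rw [inner_sub_left]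
        have f1 := hiii _ hzB
        have f2 : ⟪(Submodule.orthogonalProjection Bs u : W1), z - (Submodule.orthogonalProjection Bs z : W1)⟫
            = 0 := by
          rw [real_inner_comm]
          exact (Submodule.mem_orthogonal' Bs _).mp
            (Submodule.sub_starProjection_mem_orthogonal z) _ (Submodule.orthogonalProjection Bs u).2
        linarith
      have e3 : (Submodule.orthogonalProjection Bs z : W1) + (z - (Submodule.orthogonalProjection Bs z : W1))
          = z := by abel
      have e4 : ⟪u - (Submodule.orthogonalProjection Bs u : W1), z⟫
          = ⟪u - (Submodule.orthogonalProjection Bs u : W1), (Submodule.orthogonalProjection Bs z : W1)⟫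
          + ⟪u - (Submodule.orthogonalProjection Bs u : W1), z - (Submodule.orthogonalProjection Bs z : W1)⟫ := by
        rw [← inner_add_right, e3]
      rw [e4, e1, e2, add_zero]
    have hur_norm : ‖u - (Submodule.orthogonalProjection Bs u : W1)‖ ≤ C1 * ‖d1 u‖ := by
      have h1 := hC1 _ hurZ
      have h2 : d1 (u - (Submodule.orthogonalProjection Bs u : W1)) = d1 u := by
        rw [map_sub, (show d1 (Submodule.orthogonalProjection Bs u : W1) = 0 from LinearMap.mem_ker.mp (hBZ _ (Submodule.orthogonalProjection Bs u).2)), sub_zero]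
      rwa [h2] at h1
    have hu_norm : ‖u‖ ≤ C0 * ‖σ‖ + C1 * ‖d1 u‖ := by
      have h1 : u = (Submodule.orthogonalProjection Bs u : W1) + (u - (Submodule.orthogonalProjection Bs u : W1)) :=
        by abel
      calc ‖u‖ = ‖(Submodule.orthogonalProjection Bs u : W1) + (u - (Submodule.orthogonalProjection Bs u : W1))‖ :=
            by rw [← h1]
        _ ≤ ‖(Submodule.orthogonalProjection Bs u : W1)‖ + ‖u - (Submodule.orthogonalProjection Bs u : W1)‖ :=
            norm_add_le _ _
        _ ≤ C0 * ‖σ‖ + C1 * ‖d1 u‖ := add_le_add hub_norm hur_norm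
    have hC0K : C0 ≤ K := le_max_left _ _
    have hC1K : C1 ≤ K := le_max_right _ _
    have hs0 : (0:ℝ) ≤ ‖σ‖ := norm_nonneg σ
    have ht0 : (0:ℝ) ≤ ‖d1 u‖ := norm_nonneg _
    have hst : ‖σ‖ + ‖d1 u‖ ≤ 2 * K * ‖f‖ := by
      have h1 : ‖σ‖ * ‖σ‖ + ‖d1 u‖ * ‖d1 u‖ ≤ ‖f‖ * (C0 * ‖σ‖ + C1 * ‖d1 u‖) :=
        hen.trans (mul_le_mul_of_nonneg_left hu_norm hfn)
      have h3 : ‖f‖ * (C0 * ‖σ‖ + C1 * ‖d1 u‖) ≤ ‖f‖ * (K * (‖σ‖ + ‖d1 u‖)) := by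
        apply mul_le_mul_of_nonneg_left _ hfn
        nlinarith
      have h2 : (‖σ‖ + ‖d1 u‖) * (‖σ‖ + ‖d1 u‖) ≤ (2 * K * ‖f‖) * (‖σ‖ + ‖d1 u‖) := by
        nlinarith [sq_nonneg (‖σ‖ - ‖d1 u‖)]
      rcases (add_nonneg hs0 ht0).eq_or_lt with h0 | h0
      · rw [← h0]; positivity
      · exact le_of_mul_le_mul_right h2 h0
    have hu2 : ‖u‖ ≤ 2 * K * K * ‖f‖ := by
      have h1 : C0 * ‖σ‖ + C1 * ‖d1 u‖ ≤ K * (‖σ‖ + ‖d1 u‖) := by nlinarith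
      have h2 : K * (‖σ‖ + ‖d1 u‖) ≤ K * (2 * K * ‖f‖) :=
        mul_le_mul_of_nonneg_left hst hK0.le
      calc ‖u‖ ≤ C0 * ‖σ‖ + C1 * ‖d1 u‖ := hu_norm
        _ ≤ K * (‖σ‖ + ‖d1 u‖) := h1
        _ ≤ K * (2 * K * ‖f‖) := h2
        _ = 2 * K * K * ‖f‖ := by ring
    have g1 : Real.sqrt (‖σ‖ ^ 2 + ‖d0 σ‖ ^ 2) ≤ ‖σ‖ + ‖d0 σ‖ :=
      sqrt_sq_add_sq_le' hs0 (norm_nonneg _)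
    have g2 : Real.sqrt (‖u‖ ^ 2 + ‖d1 u‖ ^ 2) ≤ ‖u‖ + ‖d1 u‖ :=
      sqrt_sq_add_sq_le' (norm_nonneg u) ht0
    nlinarith [mul_nonneg hfn hK0.le, mul_nonneg (mul_nonneg hfn hK0.le) hK0.le]
end

section
/- Let W⁰, W¹, W² be real Hilbert spaces and d⁰ : W⁰ → W¹, d¹ : W¹ → W² continuous linear maps with d¹ ∘ d⁰ = 0 and closed ranges, and let H := ker d¹ ∩ (range d⁰)^⊥. Let Vₕ⁰ ⊆ W⁰, Vₕ¹ ⊆ W¹, Vₕ² ⊆ W² be closed subspaces with d⁰(Vₕ⁰) ⊆ Vₕ¹ and d¹(Vₕ¹) ⊆ Vₕ², and let πᵏ : Wᵏ → Wᵏ (k = 0, 1, 2) be continuous linear maps with range πᵏ ⊆ Vₕᵏ, πᵏ v = v for every v ∈ Vₕᵏ, π¹ ∘ d⁰ = d⁰ ∘ π⁰, and π² ∘ d¹ = d¹ ∘ π¹. Set Hₕ := { v ∈ Vₕ¹ : d¹ v = 0 and ⟪v, d⁰ w⟫ = 0 for all w ∈ Vₕ⁰ }, μ := sup { ‖r − π¹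 r‖ : r ∈ H, ‖r‖ = 1 }, let P_B be the orthogonal projection of W¹ onto range d⁰, and write ‖x‖_V := (‖x‖² + ‖d x‖²)^{1/2}. Then there exists C > 0 such that for every f ∈ W¹, if (σ, u, p) ∈ W⁰ × W¹ × H solves ⟪σ, τ⟫ − ⟪u, d⁰τ⟫ = 0 for all τ ∈ W⁰, ⟪d⁰σ, v⟫ + ⟪d¹u, d¹v⟫ + ⟪p, v⟫ = ⟪f, v⟫ for all v ∈ W¹, ⟪u, q⟫ = 0 for all q ∈ H, and (σₕ, uₕ, pₕ) ∈ Vₕ⁰ × Vₕ¹ × Hₕ solves the same three equations with test functions restricted to τ ∈ Vₕ⁰, v ∈ Vₕ¹, q ∈ Hₕ, then ‖σ − σₕ‖_V + ‖u − uₕ‖_V + ‖p − pₕ‖ ≤ C · ( inf_{τ ∈ Vₕ⁰} ‖σ − τ‖_V + inf_{v ∈ Vₕ¹} ‖u − v‖_V + inf_{q ∈ Vₕ¹} ‖p − q‖_V + μ · inf_{v ∈ Vₕ¹} ‖P_B u − v‖_V ). -/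
open RealInnerProductSpace



private lemma sq_le_linear {x c : ℝ} (hx : 0 ≤ x) (hc : 0 ≤ c) (h : x^2 ≤ x*c) : x ≤ c := by
  nlinarith

private lemma quadA {x a b : ℝ} (hx : 0 ≤ x) (ha : 0 ≤ a) (hb : 0 ≤ b)
    (h : x^2 ≤ x*a + b*(a+x)) : x ≤ 2*(a+b) := by
  nlinarith [mul_nonneg ha hb, sq_nonneg a, sq_nonneg b]

private lemma quadB {s k r : ℝ} (hs : 0 ≤ s) (hk : 1 ≤ k) (hr : 0 ≤ r)
    (h : s^2 ≤ s*(k*r) + (2*(k*r) + k*(k*r) + k*s)*(k*r)) : s ≤ 4*(k^2*r) := by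
  have hk0 : (0:ℝ) ≤ k := by linarith
  have hA : (0:ℝ) ≤ k^2*r := by positivity
  have h1 : k*r ≤ k^2*r := by nlinarith
  have e1 : s*(k*r) ≤ s*(k^2*r) := mul_le_mul_of_nonneg_left h1 hs
  have e2 : (2*(k*r) + k*(k*r) + k*s)*(k*r) = 2*(k^2*r^2) + k^3*r^2 + (k^2*r)*s := by
    ring
  have e3 : (0:ℝ) ≤ (k^2*r^2) * (k^2 - 1) :=
    mul_nonneg (by positivity) (by nlinarith)
  have e4 : (0:ℝ) ≤ (k^3*r^2) * (k - 1) :=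
    mul_nonneg (by positivity) (by linarith)
  have h2 : s^2 ≤ 2*(k^2*r)*s + 3*(k^2*r)^2 := by nlinarith [e1, e3, e4]
  have h3 : s ≤ 3*(k^2*r) := by nlinarith [sq_nonneg (s - 3*(k^2*r)), hA, h2]
  linarith

private lemma sqrt_sq_add_sq_le {x y : ℝ} (hx : 0 ≤ x) (hy : 0 ≤ y) :
    Real.sqrt (x^2 + y^2) ≤ x + y := by
  rw [show x^2 + y^2 = (x+y)^2 - 2*(x*y) by ring]
  calc Real.sqrt ((x+y)^2 - 2*(x*y)) ≤ Real.sqrt ((x+y)^2) := by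
        apply Real.sqrt_le_sqrt; nlinarith
    _ = x + y := by rw [Real.sqrt_sq (by linarith)]

private lemma le_sqrt_sq_add_sq_left (x y : ℝ) (hx : 0 ≤ x) :
    x ≤ Real.sqrt (x^2 + y^2) := by
  rw [Real.le_sqrt hx (by positivity)]
  nlinarith [sq_nonneg y]

private lemma le_sqrt_sq_add_sq_right (x y : ℝ) (hy : 0 ≤ y) :
    y ≤ Real.sqrt (x^2 + y^2) := by
  rw [Real.le_sqrt hy (by positivity)]
  nlinarith [sq_nonneg x]

private lemma range_preimage_bound
    {W0 W1 : Type*}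
    [NormedAddCommGroup W0] [InnerProductSpace ℝ W0] [CompleteSpace W0]
    [NormedAddCommGroup W1] [InnerProductSpace ℝ W1] [CompleteSpace W1]
    (d0 : W0 →L[ℝ] W1) (hB0 : IsClosed (LinearMap.range (d0 : W0 →ₗ[ℝ] W1) : Set W1)) :
    ∃ C : ℝ, 0 < C ∧ ∀ y ∈ LinearMap.range (d0 : W0 →ₗ[ℝ] W1), ∃ x, d0 x = y ∧ ‖x‖ ≤ C * ‖y‖ := by
  haveI : CompleteSpace (LinearMap.range (d0 : W0 →ₗ[ℝ] W1)) := hB0.completeSpace_coe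
  set D : W0 →L[ℝ] (LinearMap.range (d0 : W0 →ₗ[ℝ] W1)) :=
    d0.codRestrict (LinearMap.range (d0 : W0 →ₗ[ℝ] W1)) (fun x => LinearMap.mem_range_self _ x) with hD
  have hsurj : Function.Surjective D := by
    rintro ⟨y, x, rfl⟩
    exact ⟨x, rfl⟩
  obtain ⟨C, hCpos, hC⟩ := ContinuousLinearMap.exists_preimage_norm_le D hsurj
  refine ⟨C, hCpos, fun y hy => ?_⟩
  obtain ⟨x, hx1, hx2⟩ := hC ⟨y, hy⟩
  refine ⟨x, ?_, by simpa using hx2⟩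
  have := congrArg Subtype.val hx1
  exact this

set_option maxHeartbeats 10000000

/-- Arnold–Falk–Winther error estimate for Galerkin approximation of the mixed
Hodge-Laplacian problem by a subcomplex `Vₕ` of a bounded closed Hilbert complex,
equipped with bounded cochain projections `πᵏ`.  (The infima on the right-hand side
are expressed by universal quantification over the competing elements, and the
orthogonal projection `P_B u` by its defining property.) -/
theorem subcomplex_galerkin_error_estimate
    {W0 W1 W2 : Type*}
    [NormedAddCommGroup W0] [InnerProductSpace ℝ W0] [CompleteSpace W0]
    [NormedAddCommGroup W1] [InnerProductSpace ℝ W1] [CompleteSpace W1]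
    [NormedAddCommGroup W2] [InnerProductSpace ℝ W2] [CompleteSpace W2]
    (d0 : W0 →L[ℝ] W1) (d1 : W1 →L[ℝ] W2)
    (hdd : ∀ x : W0, d1 (d0 x) = 0)
    (hB0 : IsClosed (LinearMap.range (d0 : W0 →ₗ[ℝ] W1) : Set W1))
    (hB1 : IsClosed (LinearMap.range (d1 : W1 →ₗ[ℝ] W2) : Set W2))
    (Vh0 : Submodule ℝ W0) (Vh1 : Submodule ℝ W1) (Vh2 : Submodule ℝ W2)
    (hVh0 : IsClosed (Vh0 : Set W0)) (hVh1 : IsClosed (Vh1 : Set W1))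
    (hVh2 : IsClosed (Vh2 : Set W2))
    (hdV0 : ∀ x ∈ Vh0, d0 x ∈ Vh1) (hdV1 : ∀ x ∈ Vh1, d1 x ∈ Vh2)
    (π0 : W0 →L[ℝ] W0) (π1 : W1 →L[ℝ] W1) (π2 : W2 →L[ℝ] W2)
    (hπr0 : ∀ x : W0, π0 x ∈ Vh0) (hπr1 : ∀ x : W1, π1 x ∈ Vh1)
    (hπr2 : ∀ x : W2, π2 x ∈ Vh2)
    (hπid0 : ∀ x ∈ Vh0, π0 x = x) (hπid1 : ∀ x ∈ Vh1, π1 x = x)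
    (hπid2 : ∀ x ∈ Vh2, π2 x = x)
    (hπd0 : ∀ x : W0, π1 (d0 x) = d0 (π0 x))
    (hπd1 : ∀ x : W1, π2 (d1 x) = d1 (π1 x)) :
    ∃ C : ℝ, 0 < C ∧
      ∀ (f : W1) (σ : W0) (u p : W1) (σh : W0) (uh ph : W1),
        -- (σ, u, p) solves the continuous mixed problem with data f
        p ∈ LinearMap.ker (d1 : W1 →ₗ[ℝ] W2) ⊓ (LinearMap.range (d0 : W0 →ₗ[ℝ] W1))ᗮ →
        (∀ τ : W0, ⟪σ, τ⟫ - ⟪u, d0 τ⟫ = 0) →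
        (∀ v : W1, ⟪d0 σ, v⟫ + ⟪d1 u, d1 v⟫ + ⟪p, v⟫ = ⟪f, v⟫) →
        (∀ q ∈ LinearMap.ker (d1 : W1 →ₗ[ℝ] W2) ⊓ (LinearMap.range (d0 : W0 →ₗ[ℝ] W1))ᗮ, ⟪u, q⟫ = 0) →
        -- (σh, uh, ph) ∈ Vh0 × Vh1 × Hh solves the discrete mixed problem
        σh ∈ Vh0 → uh ∈ Vh1 →
        (ph ∈ Vh1 ∧ d1 ph = 0 ∧ ∀ w ∈ Vh0, ⟪ph, d0 w⟫ = 0) →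
        (∀ τ ∈ Vh0, ⟪σh, τ⟫ - ⟪uh, d0 τ⟫ = 0) →
        (∀ v ∈ Vh1, ⟪d0 σh, v⟫ + ⟪d1 uh, d1 v⟫ + ⟪ph, v⟫ = ⟪f, v⟫) →
        (∀ q : W1, (q ∈ Vh1 ∧ d1 q = 0 ∧ ∀ w ∈ Vh0, ⟪q, d0 w⟫ = 0) → ⟪uh, q⟫ = 0) →
        -- Pu = P_B u, the orthogonal projection of u onto range d0
        ∀ Pu : W1, Pu ∈ LinearMap.range (d0 : W0 →ₗ[ℝ] W1) → u - Pu ∈ (LinearMap.range (d0 : W0 →ₗ[ℝ] W1))ᗮ →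
        -- competitors for the best-approximation terms
        ∀ τ ∈ Vh0, ∀ v ∈ Vh1, ∀ q ∈ Vh1, ∀ v' ∈ Vh1,
          Real.sqrt (‖σ - σh‖ ^ 2 + ‖d0 (σ - σh)‖ ^ 2)
              + Real.sqrt (‖u - uh‖ ^ 2 + ‖d1 (u - uh)‖ ^ 2)
              + ‖p - ph‖ ≤
            C * (Real.sqrt (‖σ - τ‖ ^ 2 + ‖d0 (σ - τ)‖ ^ 2)
              + Real.sqrt (‖u - v‖ ^ 2 + ‖d1 (u - v)‖ ^ 2)
              + Real.sqrt (‖p - q‖ ^ 2 + ‖d1 (p - q)‖ ^ 2)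
              + (sSup {x : ℝ | ∃ r ∈ LinearMap.ker (d1 : W1 →ₗ[ℝ] W2) ⊓ (LinearMap.range (d0 : W0 →ₗ[ℝ] W1))ᗮ,
                  ‖r‖ = 1 ∧ x = ‖r - π1 r‖})
                * Real.sqrt (‖Pu - v'‖ ^ 2 + ‖d1 (Pu - v')‖ ^ 2)) := by
  classical
  obtain ⟨C0, hC0pos, hC0⟩ := range_preimage_bound d0 hB0
  obtain ⟨C1, hC1pos, hC1⟩ := range_preimage_bound d1 hB1
  -- discrete Poincaré inequalities
  set c0 : ℝ := ‖π0‖ * C0 with hc0def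
  set c1 : ℝ := ‖π1‖ * C1 with hc1def
  have hc0n : 0 ≤ c0 := by positivity
  have hc1n : 0 ≤ c1 := by positivity
  have hdP0 : ∀ y, y ∈ Vh1 → y ∈ LinearMap.range (d0 : W0 →ₗ[ℝ] W1) →
      ∃ z ∈ Vh0, d0 z = y ∧ ‖z‖ ≤ c0 * ‖y‖ := by
    intro y hy1 hy2
    obtain ⟨x, hx1, hx2⟩ := hC0 y hy2
    refine ⟨π0 x, hπr0 x, ?_, ?_⟩
    · rw [← hπd0 x, hx1, hπid1 y hy1]
    · calc ‖π0 x‖ ≤ ‖π0‖ * ‖x‖ := π0.le_opNorm x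
        _ ≤ ‖π0‖ * (C0 * ‖y‖) := by
            exact mul_le_mul_of_nonneg_left hx2 (norm_nonneg _)
        _ = c0 * ‖y‖ := by rw [hc0def]; ring
  have hdP1 : ∀ y ∈ Vh1, ∃ z ∈ Vh1, d1 z = d1 y ∧ ‖z‖ ≤ c1 * ‖d1 y‖ := by
    intro y hy
    obtain ⟨x, hx1, hx2⟩ := hC1 (d1 y) (LinearMap.mem_range_self _ y)
    refine ⟨π1 x, hπr1 x, ?_, ?_⟩
    · rw [← hπd1 x, hx1, hπd1 y, hπid1 y hy]
    · calc ‖π1 x‖ ≤ ‖π1‖ * ‖x‖ := π1.le_opNorm x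
        _ ≤ ‖π1‖ * (C1 * ‖d1 y‖) := by
            exact mul_le_mul_of_nonneg_left hx2 (norm_nonneg _)
        _ = c1 * ‖d1 y‖ := by rw [hc1def]; ring
  -- the master constant
  set K : ℝ := 1 + ‖π0‖ + ‖π1‖ + ‖π2‖ + c0 + c1 with hKdef
  have hK1 : 1 ≤ K := by
    have := norm_nonneg π0; have := norm_nonneg π1; have := norm_nonneg π2
    rw [hKdef]; linarith
  have hKn : 0 ≤ K := by linarith
  refine ⟨100 * K^3, by positivity, ?_⟩
  intro f σ u p σh uh ph hp hσeq hueq hu3 hσhV huhV hphH hσheq huheq huh3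
    Pu hPuB hPuO τ hτ v hv q hq v' hv'
  obtain ⟨hpker, hpOrth⟩ := Submodule.mem_inf.mp hp
  have hpker' : d1 p = 0 := LinearMap.mem_ker.mp hpker
  obtain ⟨hphV, hphd, hphO⟩ := hphH
  -- orthogonal projection instances
  haveI : CompleteSpace (LinearMap.range (d0 : W0 →ₗ[ℝ] W1)) := hB0.completeSpace_coe
  have hZhcl : IsClosed ((Vh1 ⊓ LinearMap.ker (d1 : W1 →ₗ[ℝ] W2) : Submodule ℝ W1) : Set W1) := by
    rw [Submodule.coe_inf]
    exact hVh1.inter (ContinuousLinearMap.isClosed_ker d1)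
  have hBhcl : IsClosed ((Vh1 ⊓ LinearMap.range (d0 : W0 →ₗ[ℝ] W1) : Submodule ℝ W1) : Set W1) := by
    rw [Submodule.coe_inf]
    exact hVh1.inter hB0
  haveI : CompleteSpace (Vh1 ⊓ LinearMap.ker (d1 : W1 →ₗ[ℝ] W2) : Submodule ℝ W1) := hZhcl.completeSpace_coe
  haveI : CompleteSpace (Vh1 ⊓ LinearMap.range (d0 : W0 →ₗ[ℝ] W1) : Submodule ℝ W1) := hBhcl.completeSpace_coe
  -- abbreviations
  set μ : ℝ := sSup {x : ℝ | ∃ r ∈ LinearMap.ker (d1 : W1 →ₗ[ℝ] W2) ⊓ (LinearMap.range (d0 : W0 →ₗ[ℝ] W1))ᗮ,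
      ‖r‖ = 1 ∧ x = ‖r - π1 r‖} with hμdef
  have hμn : 0 ≤ μ := by
    apply Real.sSup_nonneg
    rintro x ⟨r, hr, hrn, rfl⟩
    positivity
  have hμb : ∀ r : W1, d1 r = 0 → r ∈ (LinearMap.range (d0 : W0 →ₗ[ℝ] W1))ᗮ → ‖r - π1 r‖ ≤ μ * ‖r‖ := by
    intro r hr1 hr2
    rcases eq_or_ne r 0 with rfl | hr0
    · simp
    · have hrn : (0:ℝ) < ‖r‖ := norm_pos_iff.mpr hr0
      have hbdd : BddAbove {x : ℝ | ∃ r ∈ LinearMap.ker (d1 : W1 →ₗ[ℝ] W2) ⊓ (LinearMap.range (d0 : W0 →ₗ[ℝ] W1))ᗮ,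
          ‖r‖ = 1 ∧ x = ‖r - π1 r‖} := by
        refine ⟨1 + ‖π1‖, ?_⟩
        rintro x ⟨s, hs, hsn, rfl⟩
        calc ‖s - π1 s‖ ≤ ‖s‖ + ‖π1 s‖ := norm_sub_le _ _
          _ ≤ ‖s‖ + ‖π1‖ * ‖s‖ := by linarith [π1.le_opNorm s]
          _ = 1 + ‖π1‖ := by rw [hsn]; ring
      set r' : W1 := ‖r‖⁻¹ • r with hr'def
      have hr'1 : ‖r'‖ = 1 := by
        rw [hr'def, norm_smul, norm_inv, norm_norm, inv_mul_cancel₀ hrn.ne']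
      have hmem : ‖r' - π1 r'‖ ∈ {x : ℝ | ∃ r ∈ LinearMap.ker (d1 : W1 →ₗ[ℝ] W2) ⊓ (LinearMap.range (d0 : W0 →ₗ[ℝ] W1))ᗮ,
          ‖r‖ = 1 ∧ x = ‖r - π1 r‖} := by
        refine ⟨r', Submodule.mem_inf.mpr ⟨LinearMap.mem_ker.mpr ?_, ?_⟩, hr'1, rfl⟩
        · rw [hr'def, map_smul, ContinuousLinearMap.coe_coe, hr1, smul_zero]
        · exact Submodule.smul_mem _ _ hr2
      have h1 : ‖r' - π1 r'‖ ≤ μ := le_csSup hbdd hmem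
      have h2 : r - π1 r = ‖r‖ • (r' - π1 r') := by
        rw [smul_sub, map_smul, hr'def, smul_smul, mul_inv_cancel₀ hrn.ne', one_smul,
          smul_smul, mul_inv_cancel₀ hrn.ne', one_smul]
      rw [h2, norm_smul, norm_norm]
      calc ‖r‖ * ‖r' - π1 r'‖ ≤ ‖r‖ * μ := mul_le_mul_of_nonneg_left h1 (norm_nonneg _)
        _ = μ * ‖r‖ := by ring
  
  -- error equations
  have E1 : ∀ t ∈ Vh0, ⟪σ - σh, t⟫ = ⟪u - uh, d0 t⟫ := by
    intro t ht
    have h1 := hσeq t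
    have h2 := hσheq t ht
    simp only [inner_sub_left] at h1 h2 ⊢
    linarith
  have E2 : ∀ w ∈ Vh1, ⟪d0 σ - d0 σh, w⟫ + ⟪d1 u - d1 uh, d1 w⟫ + ⟪p - ph, w⟫ = 0 := by
    intro w hw
    have h1 := hueq w
    have h2 := huheq w hw
    simp only [inner_sub_left] at h1 h2 ⊢
    linarith
  -- consistency estimate for discrete harmonic test functions
  have hcons : ∀ qh : W1, qh ∈ Vh1 → d1 qh = 0 → (∀ w ∈ Vh0, ⟪qh, d0 w⟫ = 0) →
      |⟪u, qh⟫| ≤ ((1+‖π1‖) * (μ * ‖Pu - v'‖)) * ‖qh‖ := by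
    intro qh hqhV hqhd hqhO
    obtain ⟨b, hbB, h, hhO, hsum⟩ :=
      (LinearMap.range (d0 : W0 →ₗ[ℝ] W1)).exists_add_mem_mem_orthogonal qh
    obtain ⟨zb, hzb⟩ := id hbB
    have hdb : d1 b = 0 := by rw [← hzb, ContinuousLinearMap.coe_coe, hdd]
    have hdh : d1 h = 0 := by
      have hh' : h = qh - b := by rw [hsum]; abel
      rw [hh', map_sub, hqhd, hdb, sub_zero]
    obtain ⟨zu, hzu⟩ := id hPuB
    have hπPu : π1 Pu = d0 (π0 zu) := by rw [← hzu, ContinuousLinearMap.coe_coe, hπd0]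
    have hπPuB : π1 Pu ∈ LinearMap.range (d0 : W0 →ₗ[ℝ] W1) := ⟨π0 zu, hπPu.symm⟩
    have e1 : ⟪u - Pu, b⟫ = 0 := Submodule.inner_left_of_mem_orthogonal hbB hPuO
    have e2 : ⟪u, h⟫ = 0 := hu3 h (Submodule.mem_inf.mpr ⟨LinearMap.mem_ker.mpr hdh, hhO⟩)
    have e4 : ⟪π1 Pu, h⟫ = 0 := Submodule.inner_right_of_mem_orthogonal hπPuB hhO
    have e5 : ⟪π1 Pu, qh⟫ = 0 := by
      rw [hπPu, real_inner_comm]; exact hqhO (π0 zu) (hπr0 zu)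
    have key : ⟪u, qh⟫ = ⟪Pu - π1 Pu, b⟫ := by
      have l1 : ⟪u, qh⟫ = ⟪u, b⟫ + ⟪u, h⟫ := by rw [hsum, inner_add_right]
      have l2 : ⟪u - Pu, b⟫ = ⟪u, b⟫ - ⟪Pu, b⟫ := inner_sub_left _ _ _
      have l3 : ⟪Pu - π1 Pu, b⟫ = ⟪Pu, b⟫ - ⟪π1 Pu, b⟫ := inner_sub_left _ _ _
      have l4 : ⟪π1 Pu, qh⟫ = ⟪π1 Pu, b⟫ + ⟪π1 Pu, h⟫ := by rw [hsum, inner_add_right]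
      linarith
    have hsub : b - π1 b = -(h - π1 h) := by
      have hfix : π1 qh = qh := hπid1 qh hqhV
      have hz : (b - π1 b) + (h - π1 h) = qh - π1 qh := by rw [hsum, map_add]; abel
      rw [hfix, sub_self] at hz
      exact eq_neg_of_add_eq_zero_left hz
    have hπb : π1 b = d0 (π0 zb) := by rw [← hzb, ContinuousLinearMap.coe_coe, hπd0]
    have f1 : ⟪qh, π1 b⟫ = 0 := by rw [hπb]; exact hqhO (π0 zb) (hπr0 zb)
    have f2 : ⟪h, π1 b⟫ = 0 := by
      have hm : π1 b ∈ LinearMap.range (d0 : W0 →ₗ[ℝ] W1) := ⟨π0 zb, hπb.symm⟩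
      exact Submodule.inner_left_of_mem_orthogonal hm hhO
    have f3 : ⟪b, π1 b⟫ = 0 := by
      have l5 : ⟪qh, π1 b⟫ = ⟪b, π1 b⟫ + ⟪h, π1 b⟫ := by rw [hsum, inner_add_left]
      linarith
    have hb_le : ‖b‖ ≤ μ * ‖h‖ := by
      have g1 : ‖b‖^2 = ⟪b, b - π1 b⟫ := by
        rw [inner_sub_right, f3, sub_zero, real_inner_self_eq_norm_sq]
      have g2 : ‖b - π1 b‖ ≤ μ * ‖h‖ := by
        rw [hsub, norm_neg]; exact hμb h hdh hhO
      refine sq_le_linear (norm_nonneg _) (by positivity) ?_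
      calc ‖b‖^2 = ⟪b, b - π1 b⟫ := g1
        _ ≤ ‖b‖ * ‖b - π1 b‖ := real_inner_le_norm _ _
        _ ≤ ‖b‖ * (μ * ‖h‖) := mul_le_mul_of_nonneg_left g2 (norm_nonneg _)
    have hh_le : ‖h‖ ≤ ‖qh‖ := by
      have g3 : ⟪b, h⟫ = 0 := Submodule.inner_right_of_mem_orthogonal hbB hhO
      have g4 : ‖qh‖^2 = ‖b‖^2 + ‖h‖^2 := by
        rw [hsum, norm_add_sq_real, g3]; ring
      nlinarith [norm_nonneg b, norm_nonneg h, norm_nonneg qh]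
    have h6 : ‖Pu - π1 Pu‖ ≤ (1+‖π1‖) * ‖Pu - v'‖ := by
      have hrw : Pu - π1 Pu = (Pu - v') - π1 (Pu - v') := by
        rw [map_sub, hπid1 v' hv']; abel
      rw [hrw]
      calc ‖(Pu - v') - π1 (Pu - v')‖ ≤ ‖Pu - v'‖ + ‖π1 (Pu - v')‖ := norm_sub_le _ _
        _ ≤ ‖Pu - v'‖ + ‖π1‖ * ‖Pu - v'‖ := by linarith [π1.le_opNorm (Pu - v')]
        _ = (1+‖π1‖) * ‖Pu - v'‖ := by ring
    calc |⟪u, qh⟫| = |⟪Pu - π1 Pu, b⟫| := by rw [key]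
      _ ≤ ‖Pu - π1 Pu‖ * ‖b‖ := abs_real_inner_le_norm _ _
      _ ≤ ((1+‖π1‖) * ‖Pu - v'‖) * (μ * ‖h‖) := by
          apply mul_le_mul h6 hb_le (norm_nonneg _) (by positivity)
      _ = ((1+‖π1‖) * (μ * ‖Pu - v'‖)) * ‖h‖ := by ring
      _ ≤ ((1+‖π1‖) * (μ * ‖Pu - v'‖)) * ‖qh‖ := by
          apply mul_le_mul_of_nonneg_left hh_le (by positivity)
  
  -- best-approximation quantities
  set T1 : ℝ := Real.sqrt (‖σ - τ‖ ^ 2 + ‖d0 (σ - τ)‖ ^ 2) with hT1def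
  set T2 : ℝ := Real.sqrt (‖u - v‖ ^ 2 + ‖d1 (u - v)‖ ^ 2) with hT2def
  set T3 : ℝ := Real.sqrt (‖p - q‖ ^ 2 + ‖d1 (p - q)‖ ^ 2) with hT3def
  set T4 : ℝ := Real.sqrt (‖Pu - v'‖ ^ 2 + ‖d1 (Pu - v')‖ ^ 2) with hT4def
  set R : ℝ := T1 + T2 + T3 + μ * T4 with hRdef
  have hT1n : 0 ≤ T1 := by rw [hT1def]; positivity
  have hT2n : 0 ≤ T2 := by rw [hT2def]; positivity
  have hT3n : 0 ≤ T3 := by rw [hT3def]; positivity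
  have hT4n : 0 ≤ T4 := by rw [hT4def]; positivity
  have hμT4 : 0 ≤ μ * T4 := mul_nonneg hμn hT4n
  have hRn : 0 ≤ R := by rw [hRdef]; linarith
  have hKR : 0 ≤ K * R := mul_nonneg hKn hRn
  -- bounds of the π-projection errors by the best-approximation errors
  have hστ : ‖σ - τ‖ ≤ R := by
    have h := le_sqrt_sq_add_sq_left ‖σ - τ‖ ‖d0 (σ - τ)‖ (norm_nonneg _)
    rw [← hT1def] at h
    linarith
  have hd0στ : ‖d0 σ - d0 τ‖ ≤ R := by
    rw [← map_sub]
    have h := le_sqrt_sq_add_sq_right ‖σ - τ‖ ‖d0 (σ - τ)‖ (norm_nonneg _)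
    rw [← hT1def] at h
    linarith
  have huv : ‖u - v‖ ≤ R := by
    have h := le_sqrt_sq_add_sq_left ‖u - v‖ ‖d1 (u - v)‖ (norm_nonneg _)
    rw [← hT2def] at h
    linarith
  have hd1uv : ‖d1 u - d1 v‖ ≤ R := by
    rw [← map_sub]
    have h := le_sqrt_sq_add_sq_right ‖u - v‖ ‖d1 (u - v)‖ (norm_nonneg _)
    rw [← hT2def] at h
    linarith
  have hpq : ‖p - q‖ ≤ R := by
    have h := le_sqrt_sq_add_sq_left ‖p - q‖ ‖d1 (p - q)‖ (norm_nonneg _)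
    rw [← hT3def] at h
    linarith
  have hPuv' : μ * ‖Pu - v'‖ ≤ R := by
    have h := le_sqrt_sq_add_sq_left ‖Pu - v'‖ ‖d1 (Pu - v')‖ (norm_nonneg _)
    rw [← hT4def] at h
    have h2 : μ * ‖Pu - v'‖ ≤ μ * T4 := mul_le_mul_of_nonneg_left h hμn
    linarith
  -- π-approximation bounds
  have hb1 : ‖σ - π0 σ‖ ≤ K * R := by
    have h2 : σ - π0 σ = (σ - τ) - π0 (σ - τ) := by
      rw [map_sub, hπid0 τ hτ]; abel
    have h3 : (1:ℝ) + ‖π0‖ ≤ K := by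
      rw [hKdef]; linarith [norm_nonneg π1, norm_nonneg π2, hc0n, hc1n]
    calc ‖σ - π0 σ‖ = ‖(σ - τ) - π0 (σ - τ)‖ := by rw [h2]
      _ ≤ ‖σ - τ‖ + ‖π0 (σ - τ)‖ := norm_sub_le _ _
      _ ≤ ‖σ - τ‖ + ‖π0‖ * ‖σ - τ‖ := by linarith [π0.le_opNorm (σ - τ)]
      _ = (1 + ‖π0‖) * ‖σ - τ‖ := by ring
      _ ≤ K * R := mul_le_mul h3 hστ (norm_nonneg _) hKn
  have hπ1K : (1:ℝ) + ‖π1‖ ≤ K := by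
    rw [hKdef]; linarith [norm_nonneg π0, norm_nonneg π2, hc0n, hc1n]
  have hb2 : ‖d0 σ - d0 (π0 σ)‖ ≤ K * R := by
    have h2 : d0 σ - d0 (π0 σ) = (d0 σ - d0 τ) - π1 (d0 σ - d0 τ) := by
      rw [map_sub, hπd0 σ, hπd0 τ, hπid0 τ hτ]; abel
    calc ‖d0 σ - d0 (π0 σ)‖ = ‖(d0 σ - d0 τ) - π1 (d0 σ - d0 τ)‖ := by rw [h2]
      _ ≤ ‖d0 σ - d0 τ‖ + ‖π1 (d0 σ - d0 τ)‖ := norm_sub_le _ _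
      _ ≤ ‖d0 σ - d0 τ‖ + ‖π1‖ * ‖d0 σ - d0 τ‖ := by
          linarith [π1.le_opNorm (d0 σ - d0 τ)]
      _ = (1 + ‖π1‖) * ‖d0 σ - d0 τ‖ := by ring
      _ ≤ K * R := mul_le_mul hπ1K hd0στ (norm_nonneg _) hKn
  have hb3 : ‖u - π1 u‖ ≤ K * R := by
    have h2 : u - π1 u = (u - v) - π1 (u - v) := by
      rw [map_sub, hπid1 v hv]; abel
    calc ‖u - π1 u‖ = ‖(u - v) - π1 (u - v)‖ := by rw [h2]
      _ ≤ ‖u - v‖ + ‖π1 (u - v)‖ := norm_sub_le _ _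
      _ ≤ ‖u - v‖ + ‖π1‖ * ‖u - v‖ := by linarith [π1.le_opNorm (u - v)]
      _ = (1 + ‖π1‖) * ‖u - v‖ := by ring
      _ ≤ K * R := mul_le_mul hπ1K huv (norm_nonneg _) hKn
  have hb4 : ‖d1 u - d1 (π1 u)‖ ≤ K * R := by
    have h3 : (1:ℝ) + ‖π2‖ ≤ K := by
      rw [hKdef]; linarith [norm_nonneg π0, norm_nonneg π1, hc0n, hc1n]
    have h2 : d1 u - d1 (π1 u) = (d1 u - d1 v) - π2 (d1 u - d1 v) := by
      rw [map_sub, hπd1 u, hπd1 v, hπid1 v hv]; abel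
    calc ‖d1 u - d1 (π1 u)‖ = ‖(d1 u - d1 v) - π2 (d1 u - d1 v)‖ := by rw [h2]
      _ ≤ ‖d1 u - d1 v‖ + ‖π2 (d1 u - d1 v)‖ := norm_sub_le _ _
      _ ≤ ‖d1 u - d1 v‖ + ‖π2‖ * ‖d1 u - d1 v‖ := by
          linarith [π2.le_opNorm (d1 u - d1 v)]
      _ = (1 + ‖π2‖) * ‖d1 u - d1 v‖ := by ring
      _ ≤ K * R := mul_le_mul h3 hd1uv (norm_nonneg _) hKn
  have hb5 : ‖p - π1 p‖ ≤ K * R := by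
    have h2 : p - π1 p = (p - q) - π1 (p - q) := by
      rw [map_sub, hπid1 q hq]; abel
    calc ‖p - π1 p‖ = ‖(p - q) - π1 (p - q)‖ := by rw [h2]
      _ ≤ ‖p - q‖ + ‖π1 (p - q)‖ := norm_sub_le _ _
      _ ≤ ‖p - q‖ + ‖π1‖ * ‖p - q‖ := by linarith [π1.le_opNorm (p - q)]
      _ = (1 + ‖π1‖) * ‖p - q‖ := by ring
      _ ≤ K * R := mul_le_mul hπ1K hpq (norm_nonneg _) hKn
  have hbPu : (1+‖π1‖) * (μ * ‖Pu - v'‖) ≤ K * R :=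
    mul_le_mul hπ1K hPuv' (by positivity) hKn
  
  -- Step 1: control of ‖d0 σ - d0 σh‖
  have hw_le : ‖d0 (π0 σ) - d0 σh‖ ≤ K * R := by
    have hwmem : d0 (π0 σ) - d0 σh ∈ Vh1 :=
      sub_mem (hdV0 _ (hπr0 σ)) (hdV0 _ hσhV)
    have hwrange : d0 (π0 σ) - d0 σh ∈ LinearMap.range (d0 : W0 →ₗ[ℝ] W1) := ⟨π0 σ - σh, by rw [map_sub]; rfl⟩
    have hwd1 : d1 (d0 (π0 σ) - d0 σh) = 0 := by
      rw [map_sub, hdd, hdd, sub_zero]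
    have hE2w := E2 _ hwmem
    have hd1w0 : ⟪d1 u - d1 uh, d1 (d0 (π0 σ) - d0 σh)⟫ = 0 := by
      rw [hwd1, inner_zero_right]
    have hpw : ⟪p, d0 (π0 σ) - d0 σh⟫ = 0 :=
      Submodule.inner_left_of_mem_orthogonal hwrange hpOrth
    have hphw : ⟪ph, d0 (π0 σ) - d0 σh⟫ = 0 := by
      have h := hphO (π0 σ - σh) (sub_mem (hπr0 σ) hσhV)
      rw [map_sub] at h
      exact h
    have hppw : ⟪p - ph, d0 (π0 σ) - d0 σh⟫ = 0 := by
      rw [inner_sub_left, hpw, hphw, sub_zero]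
    have hmain : ⟪d0 σ - d0 σh, d0 (π0 σ) - d0 σh⟫ = 0 := by linarith
    have hw2 : ⟪d0 (π0 σ) - d0 σh, d0 (π0 σ) - d0 σh⟫ =
        ⟪d0 (π0 σ) - d0 σ, d0 (π0 σ) - d0 σh⟫ + ⟪d0 σ - d0 σh, d0 (π0 σ) - d0 σh⟫ := by
      rw [← inner_add_left]
      congr 1
      abel
    refine sq_le_linear (norm_nonneg _) hKR ?_
    calc ‖d0 (π0 σ) - d0 σh‖^2 = ⟪d0 (π0 σ) - d0 σh, d0 (π0 σ) - d0 σh⟫ :=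
          (real_inner_self_eq_norm_sq _).symm
      _ = ⟪d0 (π0 σ) - d0 σ, d0 (π0 σ) - d0 σh⟫ := by rw [hw2, hmain, add_zero]
      _ ≤ ‖d0 (π0 σ) - d0 σ‖ * ‖d0 (π0 σ) - d0 σh‖ := real_inner_le_norm _ _
      _ = ‖d0 (π0 σ) - d0 σh‖ * ‖d0 σ - d0 (π0 σ)‖ := by rw [norm_sub_rev (d0 (π0 σ))]; ring
      _ ≤ ‖d0 (π0 σ) - d0 σh‖ * (K * R) :=
          mul_le_mul_of_nonneg_left hb2 (norm_nonneg _)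
  have hbσh : ‖d0 σ - d0 σh‖ ≤ 2*(K*R) := by
    calc ‖d0 σ - d0 σh‖ = ‖(d0 σ - d0 (π0 σ)) + (d0 (π0 σ) - d0 σh)‖ := by
          congr 1; abel
      _ ≤ ‖d0 σ - d0 (π0 σ)‖ + ‖d0 (π0 σ) - d0 σh‖ := norm_add_le _ _
      _ ≤ 2*(K*R) := by linarith
  -- Step 2: control of ‖p - ph‖
  have hep : ‖p - ph‖ ≤ 6*(K*R) := by
    have hvvV : π1 p - ph ∈ Vh1 := sub_mem (hπr1 p) hphV
    have hd1q1 : d1 (π1 p) = 0 := by rw [← hπd1 p, hpker', map_zero]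
    have hd1vv : d1 (π1 p - ph) = 0 := by rw [map_sub, hd1q1, hphd, sub_zero]
    have hE2v := E2 _ hvvV
    have hz0 : ⟪d1 u - d1 uh, d1 (π1 p - ph)⟫ = 0 := by rw [hd1vv, inner_zero_right]
    have hsplit : ⟪p - ph, p - ph⟫ = ⟪p - ph, p - π1 p⟫ + ⟪p - ph, π1 p - ph⟫ := by
      rw [← inner_add_right]
      congr 1
      abel
    have hvvb : ‖π1 p - ph‖ ≤ ‖p - π1 p‖ + ‖p - ph‖ := by
      calc ‖π1 p - ph‖ = ‖(π1 p - p) + (p - ph)‖ := by congr 1; abel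
        _ ≤ ‖π1 p - p‖ + ‖p - ph‖ := norm_add_le _ _
        _ = ‖p - π1 p‖ + ‖p - ph‖ := by rw [norm_sub_rev]
    have i1 : ⟪p - ph, π1 p - ph⟫ = -⟪d0 σ - d0 σh, π1 p - ph⟫ := by linarith
    have i2 : ⟪p - ph, p - π1 p⟫ ≤ ‖p - ph‖*‖p - π1 p‖ := real_inner_le_norm _ _
    have i3 : -⟪d0 σ - d0 σh, π1 p - ph⟫ ≤ ‖d0 σ - d0 σh‖ * ‖π1 p - ph‖ := by
      have h := abs_real_inner_le_norm (d0 σ - d0 σh) (π1 p - ph)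
      have h2 := neg_abs_le (⟪d0 σ - d0 σh, π1 p - ph⟫)
      linarith
    have i4 : ‖d0 σ - d0 σh‖ * ‖π1 p - ph‖ ≤
        ‖d0 σ - d0 σh‖ * (‖p - π1 p‖ + ‖p - ph‖) :=
      mul_le_mul_of_nonneg_left hvvb (norm_nonneg _)
    have hquad : ‖p - ph‖^2 ≤ ‖p - ph‖*‖p - π1 p‖
        + ‖d0 σ - d0 σh‖ * (‖p - π1 p‖ + ‖p - ph‖) := by
      calc ‖p - ph‖^2 = ⟪p - ph, p - ph⟫ := (real_inner_self_eq_norm_sq _).symm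
        _ = ⟪p - ph, p - π1 p⟫ + ⟪p - ph, π1 p - ph⟫ := hsplit
        _ ≤ ‖p - ph‖*‖p - π1 p‖ + ‖d0 σ - d0 σh‖ * ‖π1 p - ph‖ := by
            linarith
        _ ≤ _ := by linarith
    have hfin := quadA (norm_nonneg (p - ph)) (norm_nonneg (p - π1 p))
      (norm_nonneg (d0 σ - d0 σh)) hquad
    linarith
  
  have hc0K : c0 ≤ K := by
    rw [hKdef]; linarith [norm_nonneg π0, norm_nonneg π1, norm_nonneg π2, hc1n]
  have hc1K : c1 ≤ K := by
    rw [hKdef]; linarith [norm_nonneg π0, norm_nonneg π1, norm_nonneg π2, hc0n]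
  have hP12 : K*R ≤ K^2*R := by nlinarith [hK1, hRn]
  have hP23 : K^2*R ≤ K^3*R := by nlinarith [hK1, hRn]
  -- Step 3: control of ‖d1 u - d1 uh‖
  have heV : π1 u - uh ∈ Vh1 := sub_mem (hπr1 u) huhV
  have hd1e2 : ‖d1 (π1 u) - d1 uh‖ ≤ 9*(K^2*R) := by
    obtain ⟨z1, hz1V, hz1d, hz1n⟩ := hdP1 (π1 u - uh) heV
    have hE2z := E2 z1 hz1V
    have hj0 : d1 (π1 u - uh) = d1 (π1 u) - d1 uh := map_sub _ _ _
    have hsp : ⟪d1 (π1 u) - d1 uh, d1 (π1 u) - d1 uh⟫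
        = ⟪d1 (π1 u) - d1 u, d1 z1⟫ + ⟪d1 u - d1 uh, d1 z1⟫ := by
      rw [hz1d, hj0, ← inner_add_left]
      congr 1
      abel
    have hnz : ‖d1 z1‖ = ‖d1 (π1 u) - d1 uh‖ := by rw [hz1d, hj0]
    have hz1n' : ‖z1‖ ≤ c1 * ‖d1 (π1 u) - d1 uh‖ := by
      rw [hj0] at hz1n
      exact hz1n
    have i1 : ⟪d1 (π1 u) - d1 u, d1 z1⟫ ≤ (K*R) * ‖d1 (π1 u) - d1 uh‖ := by
      calc ⟪d1 (π1 u) - d1 u, d1 z1⟫ ≤ ‖d1 (π1 u) - d1 u‖ * ‖d1 z1‖ := real_inner_le_norm _ _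
        _ = ‖d1 u - d1 (π1 u)‖ * ‖d1 (π1 u) - d1 uh‖ := by rw [norm_sub_rev, hnz]
        _ ≤ (K*R) * ‖d1 (π1 u) - d1 uh‖ := mul_le_mul_of_nonneg_right hb4 (norm_nonneg _)
    have i2 : -⟪d0 σ - d0 σh, z1⟫ ≤ ‖d0 σ - d0 σh‖ * ‖z1‖ := by
      have h := abs_real_inner_le_norm (d0 σ - d0 σh) z1
      have h2 := neg_abs_le (⟪d0 σ - d0 σh, z1⟫)
      linarith
    have i3 : -⟪p - ph, z1⟫ ≤ ‖p - ph‖ * ‖z1‖ := by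
      have h := abs_real_inner_le_norm (p - ph) z1
      have h2 := neg_abs_le (⟪p - ph, z1⟫)
      linarith
    have i4 : (‖d0 σ - d0 σh‖ + ‖p - ph‖) * ‖z1‖
        ≤ (2*(K*R) + 6*(K*R)) * (c1 * ‖d1 (π1 u) - d1 uh‖) :=
      mul_le_mul (by linarith) hz1n' (norm_nonneg _) (by positivity)
    have i5 : (2*(K*R) + 6*(K*R)) * (c1 * ‖d1 (π1 u) - d1 uh‖)
        = ‖d1 (π1 u) - d1 uh‖ * (c1 * (8*(K*R))) := by ring
    have hstep : ‖d1 (π1 u) - d1 uh‖ ≤ K*R + c1*(8*(K*R)) := by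
      refine sq_le_linear (norm_nonneg _) (by positivity) ?_
      have hq : ‖d1 (π1 u) - d1 uh‖^2 = ⟪d1 (π1 u) - d1 uh, d1 (π1 u) - d1 uh⟫ :=
        (real_inner_self_eq_norm_sq _).symm
      have e6 : ‖d1 (π1 u) - d1 uh‖ * (K*R + c1*(8*(K*R)))
          = (K*R) * ‖d1 (π1 u) - d1 uh‖ + ‖d1 (π1 u) - d1 uh‖ * (c1 * (8*(K*R))) := by
        ring
      have e7 : ‖d0 σ - d0 σh‖ * ‖z1‖ + ‖p - ph‖ * ‖z1‖
          = (‖d0 σ - d0 σh‖ + ‖p - ph‖) * ‖z1‖ := by ring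
      linarith
    have i6 : c1*(8*(K*R)) ≤ K*(8*(K*R)) :=
      mul_le_mul_of_nonneg_right hc1K (by positivity)
    have i7 : K*(8*(K*R)) = 8*(K^2*R) := by ring
    linarith
  have hfinal_d1 : ‖d1 u - d1 uh‖ ≤ 10*(K^2*R) := by
    calc ‖d1 u - d1 uh‖ = ‖(d1 u - d1 (π1 u)) + (d1 (π1 u) - d1 uh)‖ := by congr 1; abel
      _ ≤ ‖d1 u - d1 (π1 u)‖ + ‖d1 (π1 u) - d1 uh‖ := norm_add_le _ _
      _ ≤ 10*(K^2*R) := by linarith [hb4, hd1e2, hP12]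
  -- discrete Hodge decomposition of π1 u - uh
  obtain ⟨eZ, heZ, eP, hePO, heSum⟩ :=
    (Vh1 ⊓ LinearMap.ker (d1 : W1 →ₗ[ℝ] W2)).exists_add_mem_mem_orthogonal (π1 u - uh)
  obtain ⟨eB, heB, eH, heHO, heZsum⟩ :=
    (Vh1 ⊓ LinearMap.range (d0 : W0 →ₗ[ℝ] W1)).exists_add_mem_mem_orthogonal eZ
  have heZV : eZ ∈ Vh1 := (Submodule.mem_inf.mp heZ).1
  have heZk : d1 eZ = 0 := LinearMap.mem_ker.mp (Submodule.mem_inf.mp heZ).2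
  have heBV : eB ∈ Vh1 := (Submodule.mem_inf.mp heB).1
  have heBr : eB ∈ LinearMap.range (d0 : W0 →ₗ[ℝ] W1) := (Submodule.mem_inf.mp heB).2
  have heBd1 : d1 eB = 0 := by
    obtain ⟨x, hx⟩ := id heBr
    rw [← hx, ContinuousLinearMap.coe_coe, hdd]
  have heHeq : eH = eZ - eB := by rw [heZsum]; abel
  have heHV : eH ∈ Vh1 := by rw [heHeq]; exact sub_mem heZV heBV
  have heHd1 : d1 eH = 0 := by rw [heHeq, map_sub, heZk, heBd1, sub_zero]
  have heHBO : ∀ w_ ∈ Vh0, ⟪eH, d0 w_⟫ = 0 := by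
    intro w_ hw_
    have hmr : d0 w_ ∈ LinearMap.range (d0 : W0 →ₗ[ℝ] W1) := ⟨w_, rfl⟩
    exact Submodule.inner_left_of_mem_orthogonal
      (Submodule.mem_inf.mpr ⟨hdV0 w_ hw_, hmr⟩) heHO
  have hePeq : eP = (π1 u - uh) - eZ := by rw [heSum]; abel
  have hePV : eP ∈ Vh1 := by rw [hePeq]; exact sub_mem heV heZV
  have hePd1 : d1 eP = d1 (π1 u) - d1 uh := by
    rw [hePeq, map_sub, map_sub, heZk, sub_zero]
  have hdecomp : π1 u - uh = eB + eH + eP := by rw [heSum, heZsum]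
  have o1 : ⟪eH, eB⟫ = 0 := Submodule.inner_left_of_mem_orthogonal heB heHO
  have o2 : ⟪eP, eB⟫ = 0 := Submodule.inner_left_of_mem_orthogonal
    (Submodule.mem_inf.mpr ⟨heBV, LinearMap.mem_ker.mpr heBd1⟩) hePO
  have o3 : ⟪eP, eH⟫ = 0 := Submodule.inner_left_of_mem_orthogonal
    (Submodule.mem_inf.mpr ⟨heHV, LinearMap.mem_ker.mpr heHd1⟩) hePO
  -- bound on eP
  have heP_le : ‖eP‖ ≤ c1 * ‖d1 (π1 u) - d1 uh‖ := by
    obtain ⟨z2, hz2V, hz2d, hz2n⟩ := hdP1 eP hePV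
    have hmem : eP - z2 ∈ Vh1 ⊓ LinearMap.ker (d1 : W1 →ₗ[ℝ] W2) :=
      Submodule.mem_inf.mpr ⟨sub_mem hePV hz2V,
        LinearMap.mem_ker.mpr (by rw [ContinuousLinearMap.coe_coe, map_sub, hz2d, sub_self])⟩
    have ho : ⟪eP - z2, eP⟫ = 0 := Submodule.inner_right_of_mem_orthogonal hmem hePO
    have hsp : ⟪eP, eP⟫ = ⟪z2, eP⟫ + ⟪eP - z2, eP⟫ := by
      rw [← inner_add_left]
      congr 1
      abel
    refine sq_le_linear (norm_nonneg _) (by positivity) ?_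
    calc ‖eP‖^2 = ⟪eP, eP⟫ := (real_inner_self_eq_norm_sq _).symm
      _ = ⟪z2, eP⟫ := by rw [hsp, ho, add_zero]
      _ ≤ ‖z2‖ * ‖eP‖ := real_inner_le_norm _ _
      _ ≤ (c1 * ‖d1 eP‖) * ‖eP‖ := mul_le_mul_of_nonneg_right hz2n (norm_nonneg _)
      _ = ‖eP‖ * (c1 * ‖d1 (π1 u) - d1 uh‖) := by rw [hePd1]; ring
  have heP2 : ‖eP‖ ≤ 9*(K^3*R) := by
    have h1 : c1 * ‖d1 (π1 u) - d1 uh‖ ≤ K * (9*(K^2*R)) :=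
      mul_le_mul hc1K hd1e2 (norm_nonneg _) hKn
    have h2 : K * (9*(K^2*R)) = 9*(K^3*R) := by ring
    linarith
  -- preliminary bound on eB
  have heB_le : ‖eB‖ ≤ ‖u - π1 u‖ + c0 * ‖σ - σh‖ := by
    obtain ⟨z3, hz3V, hz3d, hz3n⟩ := hdP0 eB heBV heBr
    have hsp : ⟪π1 u - uh, eB⟫ = ⟪eB, eB⟫ + ⟪eH, eB⟫ + ⟪eP, eB⟫ := by
      rw [hdecomp, inner_add_left, inner_add_left]
    have hsp2 : ⟪π1 u - uh, eB⟫ = ⟪π1 u - u, eB⟫ + ⟪u - uh, eB⟫ := by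
      rw [← inner_add_left]
      congr 1
      abel
    have hE1z := E1 z3 hz3V
    rw [hz3d] at hE1z
    have i1 : ⟪π1 u - u, eB⟫ ≤ ‖u - π1 u‖ * ‖eB‖ := by
      calc ⟪π1 u - u, eB⟫ ≤ ‖π1 u - u‖ * ‖eB‖ := real_inner_le_norm _ _
        _ = ‖u - π1 u‖ * ‖eB‖ := by rw [norm_sub_rev]
    have i2 : ⟪σ - σh, z3⟫ ≤ ‖σ - σh‖ * (c0 * ‖eB‖) := by
      calc ⟪σ - σh, z3⟫ ≤ ‖σ - σh‖ * ‖z3‖ := real_inner_le_norm _ _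
        _ ≤ ‖σ - σh‖ * (c0 * ‖eB‖) := mul_le_mul_of_nonneg_left hz3n (norm_nonneg _)
    refine sq_le_linear (norm_nonneg _) (by positivity) ?_
    have hq : ‖eB‖^2 = ⟪eB, eB⟫ := (real_inner_self_eq_norm_sq _).symm
    have e1 : ‖σ - σh‖ * (c0 * ‖eB‖) = (c0 * ‖σ - σh‖) * ‖eB‖ := by ring
    have e2 : ‖eB‖ * (‖u - π1 u‖ + c0 * ‖σ - σh‖)
        = ‖u - π1 u‖ * ‖eB‖ + (c0 * ‖σ - σh‖) * ‖eB‖ := by ring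
    linarith
  -- bound on ‖π0 σ - σh‖
  have htV : π0 σ - σh ∈ Vh0 := sub_mem (hπr0 σ) hσhV
  have hS : ‖π0 σ - σh‖ ≤ 4*(K^2*R) := by
    have hE1t := E1 _ htV
    have hd0tV : d0 (π0 σ - σh) ∈ Vh1 := hdV0 _ htV
    have hd0tb : ‖d0 (π0 σ - σh)‖ ≤ K*R := by rw [map_sub]; exact hw_le
    have o4 : ⟪eH, d0 (π0 σ - σh)⟫ = 0 := heHBO _ htV
    have o5 : ⟪eP, d0 (π0 σ - σh)⟫ = 0 :=
      Submodule.inner_left_of_mem_orthogonal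
        (Submodule.mem_inf.mpr ⟨hd0tV, LinearMap.mem_ker.mpr (hdd _)⟩) hePO
    have hsp : ⟪π1 u - uh, d0 (π0 σ - σh)⟫ = ⟪eB, d0 (π0 σ - σh)⟫
        + ⟪eH, d0 (π0 σ - σh)⟫ + ⟪eP, d0 (π0 σ - σh)⟫ := by
      rw [hdecomp, inner_add_left, inner_add_left]
    have hsp2 : ⟪u - uh, d0 (π0 σ - σh)⟫
        = ⟪u - π1 u, d0 (π0 σ - σh)⟫ + ⟪π1 u - uh, d0 (π0 σ - σh)⟫ := by
      rw [← inner_add_left]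
      congr 1
      abel
    have hself : ⟪π0 σ - σh, π0 σ - σh⟫
        = ⟪π0 σ - σ, π0 σ - σh⟫ + ⟪σ - σh, π0 σ - σh⟫ := by
      rw [← inner_add_left]
      congr 1
      abel
    have n1 : ⟪π0 σ - σ, π0 σ - σh⟫ ≤ (K*R) * ‖π0 σ - σh‖ := by
      calc ⟪π0 σ - σ, π0 σ - σh⟫ ≤ ‖π0 σ - σ‖ * ‖π0 σ - σh‖ := real_inner_le_norm _ _
        _ = ‖σ - π0 σ‖ * ‖π0 σ - σh‖ := by rw [norm_sub_rev]
        _ ≤ (K*R) * ‖π0 σ - σh‖ := mul_le_mul_of_nonneg_right hb1 (norm_nonneg _)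
    have n2 : ⟪u - π1 u, d0 (π0 σ - σh)⟫ ≤ (K*R)*(K*R) := by
      calc ⟪u - π1 u, d0 (π0 σ - σh)⟫ ≤ ‖u - π1 u‖ * ‖d0 (π0 σ - σh)‖ :=
            real_inner_le_norm _ _
        _ ≤ (K*R)*(K*R) := mul_le_mul hb3 hd0tb (norm_nonneg _) hKR
    have hσσh : ‖σ - σh‖ ≤ K*R + ‖π0 σ - σh‖ := by
      calc ‖σ - σh‖ = ‖(σ - π0 σ) + (π0 σ - σh)‖ := by congr 1; abel
        _ ≤ ‖σ - π0 σ‖ + ‖π0 σ - σh‖ := norm_add_le _ _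
        _ ≤ K*R + ‖π0 σ - σh‖ := by linarith
    have heBb : ‖eB‖ ≤ K*R + K*(K*R) + K*‖π0 σ - σh‖ := by
      have h1 : c0 * ‖σ - σh‖ ≤ K * (K*R + ‖π0 σ - σh‖) :=
        mul_le_mul hc0K hσσh (norm_nonneg _) hKn
      have h2 : K * (K*R + ‖π0 σ - σh‖) = K*(K*R) + K*‖π0 σ - σh‖ := by ring
      linarith [heB_le, hb3]
    have n3 : ⟪eB, d0 (π0 σ - σh)⟫ ≤ (K*R + K*(K*R) + K*‖π0 σ - σh‖)*(K*R) := by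
      calc ⟪eB, d0 (π0 σ - σh)⟫ ≤ ‖eB‖ * ‖d0 (π0 σ - σh)‖ := real_inner_le_norm _ _
        _ ≤ (K*R + K*(K*R) + K*‖π0 σ - σh‖)*(K*R) :=
            mul_le_mul heBb hd0tb (norm_nonneg _) (by positivity)
    apply quadB (norm_nonneg _) hK1 hRn
    have hfin : ‖π0 σ - σh‖^2 = ⟪π0 σ - σh, π0 σ - σh⟫ :=
      (real_inner_self_eq_norm_sq _).symm
    have harr : (K*R + K*(K*R) + K*‖π0 σ - σh‖)*(K*R) + (K*R)*(K*R)
        = (2*(K*R) + K*(K*R) + K*‖π0 σ - σh‖)*(K*R) := by ring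
    have e0 : (K*R) * ‖π0 σ - σh‖ = ‖π0 σ - σh‖ * (K*R) := by ring
    linarith
  have hσσh2 : ‖σ - σh‖ ≤ 5*(K^2*R) := by
    have h1 : ‖σ - σh‖ ≤ ‖σ - π0 σ‖ + ‖π0 σ - σh‖ := by
      calc ‖σ - σh‖ = ‖(σ - π0 σ) + (π0 σ - σh)‖ := by congr 1; abel
        _ ≤ ‖σ - π0 σ‖ + ‖π0 σ - σh‖ := norm_add_le _ _
    linarith [hb1, hS, hP12]
  have heB2 : ‖eB‖ ≤ 6*(K^3*R) := by
    have h1 : c0 * ‖σ - σh‖ ≤ K * (5*(K^2*R)) :=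
      mul_le_mul hc0K hσσh2 (norm_nonneg _) hKn
    have h2 : K * (5*(K^2*R)) = 5*(K^3*R) := by ring
    linarith [heB_le, hb3, hP12, hP23]
  -- bound on eH
  have heH_le : ‖eH‖ ≤ 2*(K*R) := by
    have o1' : ⟪eB, eH⟫ = 0 := by rw [real_inner_comm]; exact o1
    have hsp : ⟪π1 u - uh, eH⟫ = ⟪eB, eH⟫ + ⟪eH, eH⟫ + ⟪eP, eH⟫ := by
      rw [hdecomp, inner_add_left, inner_add_left]
    have hsp2 : ⟪π1 u - uh, eH⟫ = ⟪π1 u - u, eH⟫ + ⟪u - uh, eH⟫ := by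
      rw [← inner_add_left]
      congr 1
      abel
    have hsp3 : ⟪u - uh, eH⟫ = ⟪u, eH⟫ - ⟪uh, eH⟫ := inner_sub_left _ _ _
    have huh0 : ⟪uh, eH⟫ = 0 := huh3 eH ⟨heHV, heHd1, heHBO⟩
    have hcons' := hcons eH heHV heHd1 heHBO
    have i1 : ⟪u, eH⟫ ≤ (K*R) * ‖eH‖ := by
      have h1 : ⟪u, eH⟫ ≤ |⟪u, eH⟫| := le_abs_self _
      have h2 : ((1+‖π1‖) * (μ * ‖Pu - v'‖)) * ‖eH‖ ≤ (K*R) * ‖eH‖ :=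
        mul_le_mul_of_nonneg_right hbPu (norm_nonneg _)
      linarith
    have i2 : ⟪π1 u - u, eH⟫ ≤ (K*R) * ‖eH‖ := by
      calc ⟪π1 u - u, eH⟫ ≤ ‖π1 u - u‖ * ‖eH‖ := real_inner_le_norm _ _
        _ = ‖u - π1 u‖ * ‖eH‖ := by rw [norm_sub_rev]
        _ ≤ (K*R) * ‖eH‖ := mul_le_mul_of_nonneg_right hb3 (norm_nonneg _)
    refine sq_le_linear (norm_nonneg _) (by positivity) ?_
    have hq : ‖eH‖^2 = ⟪eH, eH⟫ := (real_inner_self_eq_norm_sq _).symm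
    have e1 : ‖eH‖ * (2*(K*R)) = (K*R) * ‖eH‖ + (K*R) * ‖eH‖ := by ring
    linarith
  -- assembly
  have hu_uh : ‖u - uh‖ ≤ 18*(K^3*R) := by
    have h1 : ‖u - uh‖ = ‖(u - π1 u) + (eB + eH + eP)‖ := by
      rw [← hdecomp]
      congr 1
      abel
    have h2 : ‖(u - π1 u) + (eB + eH + eP)‖ ≤ ‖u - π1 u‖ + (‖eB‖ + ‖eH‖ + ‖eP‖) := by
      have t1 := norm_add_le (u - π1 u) (eB + eH + eP)
      have t2 := norm_add_le (eB + eH) eP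
      have t3 := norm_add_le eB eH
      have t4 := norm_add_le (eB + eH + eP)
      calc ‖(u - π1 u) + (eB + eH + eP)‖ ≤ ‖u - π1 u‖ + ‖eB + eH + eP‖ := t1
        _ ≤ ‖u - π1 u‖ + (‖eB‖ + ‖eH‖ + ‖eP‖) := by linarith
    rw [h1]
    calc ‖(u - π1 u) + (eB + eH + eP)‖ ≤ ‖u - π1 u‖ + (‖eB‖ + ‖eH‖ + ‖eP‖) := h2
      _ ≤ 18*(K^3*R) := by linarith [hb3, heB2, heH_le, heP2, hP12, hP23]
  have hs1 := sqrt_sq_add_sq_le (norm_nonneg (σ - σh)) (norm_nonneg (d0 (σ - σh)))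
  have hs2 := sqrt_sq_add_sq_le (norm_nonneg (u - uh)) (norm_nonneg (d1 (u - uh)))
  have g1 : ‖d0 (σ - σh)‖ = ‖d0 σ - d0 σh‖ := by rw [map_sub]
  have g2 : ‖d1 (u - uh)‖ = ‖d1 u - d1 uh‖ := by rw [map_sub]
  rw [g1] at hs1
  rw [g2] at hs2
  have hR3 : 0 ≤ K^3*R := by linarith [hKR, hP12, hP23]
  have hgoal : 100 * K^3 * R = 100*(K^3*R) := by ring
  calc Real.sqrt (‖σ - σh‖ ^ 2 + ‖d0 (σ - σh)‖ ^ 2)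
      + Real.sqrt (‖u - uh‖ ^ 2 + ‖d1 (u - uh)‖ ^ 2) + ‖p - ph‖
      ≤ (‖σ - σh‖ + ‖d0 σ - d0 σh‖) + (‖u - uh‖ + ‖d1 u - d1 uh‖) + ‖p - ph‖ := by
        rw [g1, g2]
        linarith
    _ ≤ 100 * K^3 * R := by
        rw [hgoal]
        linarith [hσσh2, hbσh, hu_uh, hfinal_d1, hep, hP12, hP23, hR3, hKR]
end

section
/- Let W and Wₕ be real Hilbert spaces, i : Wₕ → W an injective continuous linear map, and Π : W → Wₕ a continuous linear map with Π ∘ i = id on Wₕ. Then for every f ∈ W and every w ∈ Wₕ, ‖Π f − i* f‖ ≤ ‖id − i* ∘ i‖ · ‖Π‖ · ‖f‖ + ‖i‖ · (1 + ‖i‖ · ‖Π‖) · ‖f − i w‖, where i* denotes the Hilbert adjoint of i. In particular, ‖Π f − i* f‖ ≤ ‖id − i* ∘ i‖ · ‖Π‖ · ‖f‖ + ‖i‖ · (1 + ‖i‖ · ‖Π‖) · inf_{w ∈ Wₕ} ‖f − i w‖. -/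
open ContinuousLinearMap

/-- Choosing discrete data by any bounded linear projection `Π` (with `Π ∘ i = id`)
deviates from the ideal data `i* f` by at most the non-unitarity of `i` plus the
best-approximation error of `f` by elements of the range of `i`. -/
theorem projected_data_estimate
    {Wh W : Type*}
    [NormedAddCommGroup Wh] [InnerProductSpace ℝ Wh] [CompleteSpace Wh]
    [NormedAddCommGroup W] [InnerProductSpace ℝ W] [CompleteSpace W]
    (i : Wh →L[ℝ] W) (hi : Function.Injective i)
    (Pr : W →L[ℝ] Wh) (hPri : ∀ x : Wh, Pr (i x) = x) :
    (∀ (f : W) (w : Wh),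
      ‖Pr f - (adjoint i) f‖ ≤
        ‖ContinuousLinearMap.id ℝ Wh - (adjoint i).comp i‖ * ‖Pr‖ * ‖f‖
          + ‖i‖ * (1 + ‖i‖ * ‖Pr‖) * ‖f - i w‖) ∧
    (∀ f : W,
      ‖Pr f - (adjoint i) f‖ ≤
        ‖ContinuousLinearMap.id ℝ Wh - (adjoint i).comp i‖ * ‖Pr‖ * ‖f‖
          + ‖i‖ * (1 + ‖i‖ * ‖Pr‖) * ⨅ w : Wh, ‖f - i w‖) := by
  have key : ∀ (f : W) (w : Wh),
      ‖Pr f - (adjoint i) f‖ ≤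
        ‖ContinuousLinearMap.id ℝ Wh - (adjoint i).comp i‖ * ‖Pr‖ * ‖f‖
          + ‖i‖ * (1 + ‖i‖ * ‖Pr‖) * ‖f - i w‖ := by
    intro f w
    set D := ContinuousLinearMap.id ℝ Wh - (adjoint i).comp i with hD
    have hsplit : Pr f - (adjoint i) f = D (Pr f) + (adjoint i) (i (Pr f) - f) := by
      simp [hD, map_sub]

    have h1 : ‖D (Pr f)‖ ≤ ‖D‖ * ‖Pr‖ * ‖f‖ := by
      calc ‖D (Pr f)‖ ≤ ‖D‖ * ‖Pr f‖ := D.le_opNorm _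
        _ ≤ ‖D‖ * (‖Pr‖ * ‖f‖) :=
            mul_le_mul_of_nonneg_left (Pr.le_opNorm f) (norm_nonneg _)
        _ = ‖D‖ * ‖Pr‖ * ‖f‖ := by ring
    have h2 : ‖i (Pr f) - f‖ ≤ (1 + ‖i‖ * ‖Pr‖) * ‖f - i w‖ := by
      have heq : i (Pr f) - f = i (Pr (f - i w)) - (f - i w) := by
        simp [map_sub, hPri]
      rw [heq]
      calc ‖i (Pr (f - i w)) - (f - i w)‖
          ≤ ‖i (Pr (f - i w))‖ + ‖f - i w‖ := norm_sub_le _ _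
        _ ≤ ‖i‖ * (‖Pr‖ * ‖f - i w‖) + ‖f - i w‖ := by
            gcongr
            calc ‖i (Pr (f - i w))‖ ≤ ‖i‖ * ‖Pr (f - i w)‖ := i.le_opNorm _
              _ ≤ ‖i‖ * (‖Pr‖ * ‖f - i w‖) :=
                  mul_le_mul_of_nonneg_left (Pr.le_opNorm _) (norm_nonneg _)
        _ = (1 + ‖i‖ * ‖Pr‖) * ‖f - i w‖ := by ring
    have h3 : ‖(adjoint i) (i (Pr f) - f)‖ ≤ ‖i‖ * ((1 + ‖i‖ * ‖Pr‖) * ‖f - i w‖) := by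
      calc ‖(adjoint i) (i (Pr f) - f)‖ ≤ ‖adjoint i‖ * ‖i (Pr f) - f‖ :=
            (adjoint i).le_opNorm _
        _ = ‖i‖ * ‖i (Pr f) - f‖ := by exact congrArg (· * _) (adjoint.norm_map i)
        _ ≤ ‖i‖ * ((1 + ‖i‖ * ‖Pr‖) * ‖f - i w‖) :=
            mul_le_mul_of_nonneg_left h2 (norm_nonneg _)
    calc ‖Pr f - (adjoint i) f‖ = ‖D (Pr f) + (adjoint i) (i (Pr f) - f)‖ := by rw [hsplit]
      _ ≤ ‖D (Pr f)‖ + ‖(adjoint i) (i (Pr f) - f)‖ := norm_add_le _ _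
      _ ≤ ‖D‖ * ‖Pr‖ * ‖f‖ + ‖i‖ * (1 + ‖i‖ * ‖Pr‖) * ‖f - i w‖ := by
          rw [mul_assoc ‖i‖]; exact add_le_add h1 h3
  refine ⟨key, fun f => ?_⟩
  have hc : (0:ℝ) ≤ ‖i‖ * (1 + ‖i‖ * ‖Pr‖) := by positivity
  rw [Real.mul_iInf_of_nonneg hc]
  have hbdd : BddBelow (Set.range fun w : Wh => ‖i‖ * (1 + ‖i‖ * ‖Pr‖) * ‖f - i w‖) := by
    refine ⟨0, ?_⟩
    rintro x ⟨w, rfl⟩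
    positivity
  rw [← sub_le_iff_le_add']
  apply le_ciInf
  intro w
  rw [sub_le_iff_le_add']
  exact key f w
end

section
/- Let Wₕ and W be real Hilbert spaces and i : Wₕ → W a continuous linear map such that a · ‖v‖ ≤ ‖i v‖ ≤ b · ‖v‖ for all v ∈ Wₕ, where 0 ≤ a ≤ b. Then, with i* the Hilbert adjoint of i, the operator J := i* ∘ i satisfies ‖id − J‖ ≤ max(|1 − a²|, |1 − b²|). -/
open ContinuousLinearMap

/-- A self-adjoint operator on a real Hilbert space whose quadratic form is bounded by
`C * ‖x‖ ^ 2` has operator norm at most `C`. -/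
lemma norm_le_of_forall_inner_le
    {E : Type*} [NormedAddCommGroup E] [InnerProductSpace ℝ E] [CompleteSpace E]
    (T : E →L[ℝ] E) (hT : IsSelfAdjoint T) (C : ℝ) (hC : 0 ≤ C)
    (h : ∀ x : E, |(inner ℝ (T x) x : ℝ)| ≤ C * ‖x‖ ^ 2) : ‖T‖ ≤ C := by
  have hsym : ∀ x y : E, (inner ℝ (T x) y : ℝ) = inner ℝ (T y) x := by
    intro x y
    exact ((isSelfAdjoint_iff_isSymmetric.mp hT).apply_clm x y).trans (real_inner_comm _ _)
  have key : ∀ x y : E, (inner ℝ (T x) y : ℝ) ≤ C / 2 * (‖x‖ ^ 2 + ‖y‖ ^ 2) := by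
    intro x y
    have pol : (4 : ℝ) * inner ℝ (T x) y
        = inner ℝ (T (x + y)) (x + y) - inner ℝ (T (x - y)) (x - y) := by
      simp only [map_add, map_sub, inner_add_left, inner_add_right,
        inner_sub_left, inner_sub_right]
      rw [hsym y x]
      ring
    have h1 := (abs_le.mp (h (x + y))).2
    have h2 := (abs_le.mp (h (x - y))).1
    have hpar : ‖x + y‖ ^ 2 + ‖x - y‖ ^ 2 = 2 * (‖x‖ ^ 2 + ‖y‖ ^ 2) := by
      have := parallelogram_law_with_norm ℝ x y
      nlinarith [this]
    nlinarith [pol, h1, h2, hpar]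
  refine T.opNorm_le_bound hC fun x => ?_
  rcases eq_or_ne (T x) 0 with h0 | h0
  · simp [h0, mul_nonneg hC (norm_nonneg x)]
  · have hTx : 0 < ‖T x‖ := norm_pos_iff.mpr h0
    have := key x ((‖x‖ / ‖T x‖) • T x)
    rw [real_inner_smul_right, real_inner_self_eq_norm_sq] at this
    have hnorm : ‖(‖x‖ / ‖T x‖) • T x‖ = ‖x‖ := by
      rw [norm_smul, Real.norm_of_nonneg (by positivity)]
      field_simp
    rw [hnorm] at this
    have hx : 0 ≤ ‖x‖ := norm_nonneg x
    rcases eq_or_lt_of_le hx with hx0 | hx0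
    · have : x = 0 := by simpa using (norm_eq_zero.mp hx0.symm)
      simp [this] at h0
    · have h3 : ‖x‖ / ‖T x‖ * ‖T x‖ ^ 2 = ‖x‖ * ‖T x‖ := by
        field_simp
      rw [h3] at this
      -- this : ‖x‖ * ‖T x‖ ≤ C / 2 * (‖x‖ ^ 2 + ‖x‖ ^ 2)
      nlinarith [this]

/-- Two-sided norm bounds `a ‖v‖ ≤ ‖i v‖ ≤ b ‖v‖` on a continuous linear map `i`
between real Hilbert spaces yield `‖id − J‖ ≤ max |1 − a²| |1 − b²|` for the
pulled-back inner product operator `J = i* ∘ i`. -/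
theorem norm_bounds_jacobian_estimate
    {Wh W : Type*}
    [NormedAddCommGroup Wh] [InnerProductSpace ℝ Wh] [CompleteSpace Wh]
    [NormedAddCommGroup W] [InnerProductSpace ℝ W] [CompleteSpace W]
    (i : Wh →L[ℝ] W) (a b : ℝ) (ha : 0 ≤ a) (hab : a ≤ b)
    (hbound : ∀ v : Wh, a * ‖v‖ ≤ ‖i v‖ ∧ ‖i v‖ ≤ b * ‖v‖) :
    ‖ContinuousLinearMap.id ℝ Wh - (adjoint i).comp i‖ ≤
      max |1 - a ^ 2| |1 - b ^ 2| := by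
  set C := max |1 - a ^ 2| |1 - b ^ 2| with hC
  have hCnn : 0 ≤ C := le_trans (abs_nonneg _) (le_max_left _ _)
  have hsa : IsSelfAdjoint (ContinuousLinearMap.id ℝ Wh - (adjoint i).comp i) := by
    rw [isSelfAdjoint_iff']
    rw [map_sub, adjoint_id, adjoint_comp, adjoint_adjoint]
  apply norm_le_of_forall_inner_le _ hsa C hCnn
  intro x
  have hinner : (inner ℝ ((ContinuousLinearMap.id ℝ Wh - (adjoint i).comp i) x) x : ℝ)
      = ‖x‖ ^ 2 - ‖i x‖ ^ 2 := by
    simp only [sub_apply, coe_id', id_eq, comp_apply, inner_sub_left]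
    rw [adjoint_inner_left, real_inner_self_eq_norm_sq, real_inner_self_eq_norm_sq]
  rw [hinner]
  obtain ⟨hlo, hhi⟩ := hbound x
  have hax : 0 ≤ a * ‖x‖ := mul_nonneg ha (norm_nonneg x)
  have h1 : a ^ 2 * ‖x‖ ^ 2 ≤ ‖i x‖ ^ 2 := by nlinarith
  have h2 : ‖i x‖ ^ 2 ≤ b ^ 2 * ‖x‖ ^ 2 := by nlinarith [norm_nonneg (i x)]
  rw [abs_le]
  constructor
  · have : -(|1 - b ^ 2|) * ‖x‖ ^ 2 ≤ (1 - b ^ 2) * ‖x‖ ^ 2 := by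
      apply mul_le_mul_of_nonneg_right (neg_abs_le _) (by positivity)
    have hle : -(C * ‖x‖ ^ 2) ≤ -(|1 - b ^ 2|) * ‖x‖ ^ 2 := by
      have : |1 - b ^ 2| * ‖x‖ ^ 2 ≤ C * ‖x‖ ^ 2 :=
        mul_le_mul_of_nonneg_right (le_max_right _ _) (by positivity)
      linarith
    nlinarith
  · have : (1 - a ^ 2) * ‖x‖ ^ 2 ≤ |1 - a ^ 2| * ‖x‖ ^ 2 :=
      mul_le_mul_of_nonneg_right (le_abs_self _) (by positivity)
    have hle : |1 - a ^ 2| * ‖x‖ ^ 2 ≤ C * ‖x‖ ^ 2 :=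
      mul_le_mul_of_nonneg_right (le_max_left _ _) (by positivity)
    nlinarith
end
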